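/- arXiv:2510.20026 — 10 statements merged into one kernel-verified Lean document; each statement's English description precedes it below -/
import Mathlib

section
/- Let m ≥ 1 and let c_1,…,c_m be odd integers with c_i ≥ 3 for all i and Σ_{i=1}^m c_i = m(2m+1). Let G be the m-cycle graph G(c_1,…,c_m) with center r and let the source be s = r. Then G admits a broadcast scheme from s completing within 2m rounds if and only if there exist a bijection α from {1,…,m} onto the even numbers {2,4,…,2m} and a bijection β from {1,…,m} onto the odd numbers {1,3,…,2m−1} such that α(i)+β(i) = c_i for all i ∈ {1,…,m}. -/
/-- A broadcast scheme for `(G, s)`: inform times `τ` and parents `par`.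
`τ s = 0`; every other vertex `v` has a parent adjacent to it informed strictly
earlier, and a vertex informs at most one of its children per round. -/
def IsBroadcastScheme {V : Type*} (G : SimpleGraph V) (s : V)
    (τ : V → ℕ) (par : V → V) : Prop :=
  τ s = 0 ∧
  (∀ v, v ≠ s → G.Adj (par v) v ∧ τ (par v) < τ v) ∧
  ∀ u : V, Set.InjOn τ {v | v ≠ s ∧ par v = u}

def kCycleRel {k : ℕ} (c : Fin k → ℕ) :
    Option ((i : Fin k) × Fin (c i)) → Option ((i : Fin k) × Fin (c i)) → Prop
  | none, some ⟨i, j⟩ => (j : ℕ) = 0 ∨ (j : ℕ) = c i - 1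
  | some ⟨i, j⟩, some ⟨i', j'⟩ => i = i' ∧ (j' : ℕ) = (j : ℕ) + 1
  | _, _ => False

/-- The `k`-cycle graph `G(c₁, …, c_k)`: `k` cycles sharing the single center
vertex `none`, the `i`-th cycle having `c i` vertices besides the center
(vertex `⟨i, j⟩` encodes the `(j+1)`-st vertex of the `i`-th cycle). -/
def kCycleGraph {k : ℕ} (c : Fin k → ℕ) :
    SimpleGraph (Option ((i : Fin k) × Fin (c i))) :=
  SimpleGraph.fromRel (kCycleRel c)

/-!
Along the `i`-th cycle every vertex is informed by one of its two cycle neighbours, and the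
vertices informed from the side of the end `(i, 1)` form an initial segment of the cycle. If
the center informs an end at time `t`, at most `2m + 1 - t` vertices are reached through that
end within `2m` rounds, and the center informs at most one end per round, so the cycles hold at
most `∑_{t=1}^{2m} (2m + 1 - t) = m(2m + 1)` vertices. Since this is exactly `∑ cᵢ`, all bounds
are tight: the lengths of the two segments of every cycle together run through `{1, …, 2m}` once
each, and as `cᵢ` is odd exactly one of the two lengths of cycle `i` is even. Conversely, given
`α` and `β`, the center informs the ends of cycle `i` at times `2m + 1 - α i` and
`2m + 1 - β i`, and the message runs along segments of lengths `α i` and `β i`.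
-/

open Finset

theorem sum_Icc_one_two_mul (k : ℕ) : ∑ n ∈ Icc 1 (2 * k), n = k * (2 * k + 1) := by
  induction k with
  | zero => simp
  | succ k ih =>
    rw [show 2 * (k + 1) = 2 * k + 1 + 1 by ring, sum_Icc_succ_top (by omega),
      sum_Icc_succ_top (by omega), ih]
    ring

theorem bijOn_Icc_of_le_of_sum_eq {ι : Type*} [Fintype ι] {x y : ι → ℕ}
    (hxy : ∀ e, x e ≤ y e) (hy : ∀ e, x e ≠ 0 → y e ≤ Fintype.card ι)
    (hinj : Set.InjOn y {e | x e ≠ 0})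
    (hsum : ∑ e, x e = ∑ n ∈ Icc 1 (Fintype.card ι), n) :
    Set.BijOn x Set.univ (Set.Icc 1 (Fintype.card ι)) := by
  classical
  set N := Fintype.card ι
  set S : Finset ι := {e | x e ≠ 0}
  have hinjS : Set.InjOn y S := by simpa [S] using hinj
  have hyS : S.image y ⊆ Icc 1 N := by
    intro n hn
    obtain ⟨e, he, rfl⟩ := mem_image.1 hn
    have he : x e ≠ 0 := (mem_filter.1 he).2
    exact mem_Icc.2 ⟨(Nat.one_le_iff_ne_zero.2 he).trans (hxy e), hy e he⟩
  -- `∑ x ≤ ∑_S y = ∑_{y(S)} n ≤ ∑_{n=1}^N n`, so every inequality of the chain is an equality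
  have hle : ∑ e ∈ S, x e ≤ ∑ e ∈ S, y e := sum_le_sum fun e _ => hxy e
  have himage : ∑ n ∈ S.image y, n = ∑ e ∈ S, y e := sum_image hinjS
  have hsub : ∑ n ∈ S.image y, n ≤ ∑ n ∈ Icc 1 N, n := sum_le_sum_of_subset hyS
  rw [sum_filter_ne_zero] at hle
  have hxyS : ∀ e ∈ S, x e = y e :=
    (sum_eq_sum_iff_of_le fun e _ => hxy e).1 (by rw [sum_filter_ne_zero]; omega)
  have himg : S.image y = Icc 1 N := by
    by_contra hne
    obtain ⟨n, hn, hnS⟩ := exists_of_ssubset (hyS.ssubset_of_ne hne)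
    have := sum_lt_sum_of_subset (f := fun n => n) hyS hn hnS (mem_Icc.1 hn).1
      fun _ _ _ => Nat.zero_le _
    omega
  have hSuniv : S = univ := by
    refine eq_univ_of_card S ?_
    rw [← card_image_of_injOn hinjS, himg, Nat.card_Icc]; omega
  have hxy' : ∀ e, x e = y e := fun e => hxyS e (hSuniv ▸ mem_univ e)
  refine ⟨fun e _ => ?_, fun e _ e' _ h => ?_, fun n hn => ?_⟩
  · have : y e ∈ S.image y := mem_image_of_mem y (hSuniv ▸ mem_univ e)
    rw [himg, mem_Icc] at this
    rw [hxy' e]; exact this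
  · rw [hxy', hxy'] at h
    exact hinjS (hSuniv ▸ mem_univ e) (hSuniv ▸ mem_univ e') h
  · rw [← coe_Icc, ← himg, coe_image] at hn
    obtain ⟨e, -, he⟩ := hn
    exact ⟨e, Set.mem_univ e, (hxy' e).trans he⟩

theorem bijOn_ite_of_bijOn_sumElim {ι : Type*} {S : Set ℕ} {a b : ι → ℕ} (P : ℕ → Prop)
    [DecidablePred P] (h : Set.BijOn (Sum.elim a b) Set.univ S) (hP : ∀ i, P (a i) ↔ ¬ P (b i)) :
    Set.BijOn (fun i => if P (a i) then a i else b i) Set.univ {x | P x ∧ x ∈ S} := by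
  have hsel : ∀ i, (if P (a i) then a i else b i) =
      Sum.elim a b (if P (a i) then .inl i else .inr i) := fun i => by split_ifs <;> rfl
  refine ⟨fun i _ => ?_, fun i _ j _ hij => ?_, fun x ⟨hx, hxS⟩ => ?_⟩
  · dsimp only
    refine ⟨by split_ifs with hi <;> [exact hi; exact not_not.1 (mt (hP i).2 hi)], ?_⟩
    rw [hsel]; exact h.mapsTo (Set.mem_univ _)
  · simp only [hsel] at hij
    have := h.injOn (Set.mem_univ _) (Set.mem_univ _) hij
    split_ifs at this <;> simpa using this
  · obtain ⟨e | e, -, he⟩ := h.surjOn hxS <;> refine ⟨e, Set.mem_univ e, ?_⟩ <;>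
      simp only [Sum.elim_inl, Sum.elim_inr] at he <;> subst he
    · simp [hx]
    · simp [(hP e).not_left.2 hx]

theorem exists_even_odd_of_bijOn_sumElim {ι : Type*} {S : Set ℕ} {a b : ι → ℕ}
    (h : Set.BijOn (Sum.elim a b) Set.univ S) (hodd : ∀ i, Odd (a i + b i)) :
    ∃ α β : ι → ℕ, Set.BijOn α Set.univ {x | Even x ∧ x ∈ S} ∧
      Set.BijOn β Set.univ {x | Odd x ∧ x ∈ S} ∧ ∀ i, α i + β i = a i + b i := by
  have hparity : ∀ i, Even (a i) ↔ ¬ Even (b i) := fun i => by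
    have := hodd i; rw [← Nat.not_even_iff_odd, Nat.even_add] at this; tauto
  have hparity' : ∀ i, Odd (a i) ↔ ¬ Odd (b i) := fun i => by
    simp only [← Nat.not_even_iff_odd]; exact not_congr (hparity i)
  refine ⟨_, _, bijOn_ite_of_bijOn_sumElim Even h hparity,
    bijOn_ite_of_bijOn_sumElim Odd h hparity', fun i => ?_⟩
  by_cases hi : Even (a i)
  · simp [hi, Nat.not_odd_iff_even.2 hi]
  · simp [hi, Nat.not_even_iff_odd.1 hi, add_comm]

theorem subsingleton_children_of_adj_eq_or {V : Type*} {G : SimpleGraph V} {s : V} {τ : V → ℕ}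
    {par : V → V} (hpar : ∀ v, v ≠ s → G.Adj (par v) v ∧ τ (par v) < τ v) {u A B : V}
    (hu : u ≠ s) (hN : ∀ w, G.Adj u w → w = A ∨ w = B) :
    {v | v ≠ s ∧ par v = u}.Subsingleton := by
  rintro v ⟨hv, rfl⟩ w ⟨hw, hvw⟩
  have hu' := hpar (par v) hu
  have hv' := hpar v hv
  have hw' := hpar w hw
  rw [hvw] at hw'
  -- the parent of `u` is a third neighbour of `u`, distinct from both children
  have hpv : par (par v) ≠ v := fun h => by rw [h] at hu'; omega
  have hpw : par (par v) ≠ w := fun h => by rw [h] at hu'; omega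
  rcases hN _ hu'.1.symm with h | h <;> rcases hN v hv'.1 with h1 | h1 <;>
    rcases hN w hw'.1 with h2 | h2 <;> simp_all

theorem IsBroadcastScheme.pos_of_ne {V : Type*} {G : SimpleGraph V} {s : V} {τ : V → ℕ}
    {par : V → V} (hs : IsBroadcastScheme G s τ par) {v : V} (hv : v ≠ s) : 0 < τ v :=
  Nat.zero_lt_of_lt (hs.2.1 v hv).2

variable {k : ℕ} {c : Fin k → ℕ}

abbrev KCycleVertex (c : Fin k → ℕ) : Type := Option ((i : Fin k) × Fin (c i))

/-- Position `p` on the `i`-th cycle, walked from the center (position `0`) around to the center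
again (position `c i + 1`). -/
def kCyclePos (c : Fin k → ℕ) (i : Fin k) : ℕ → KCycleVertex c
  | 0 => none
  | p + 1 => if h : p < c i then some ⟨i, ⟨p, h⟩⟩ else none

@[simp] theorem kCyclePos_zero (i : Fin k) : kCyclePos c i 0 = none := rfl

theorem kCyclePos_succ {i : Fin k} (j : Fin (c i)) : kCyclePos c i (j + 1) = some ⟨i, j⟩ := by
  simp [kCyclePos]

theorem kCyclePos_succ_self (i : Fin k) : kCyclePos c i (c i + 1) = none := by
  simp [kCyclePos]

theorem kCyclePos_ne_none {i : Fin k} {p : ℕ} (h1 : 1 ≤ p) (h2 : p ≤ c i) :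
    kCyclePos c i p ≠ none := by
  obtain ⟨p, rfl⟩ := Nat.exists_eq_add_of_le' h1
  simp [kCyclePos, show p < c i by omega]

theorem kCyclePos_eq_kCyclePos {i i' : Fin k} {p p' : ℕ} (h : kCyclePos c i p = kCyclePos c i' p')
    (hne : kCyclePos c i p ≠ none) : i = i' ∧ p = p' := by
  rcases p with _ | p
  · exact absurd rfl hne
  rcases p' with _ | p'
  · exact absurd h hne
  simp only [kCyclePos] at h hne
  split_ifs at h hne
  · obtain ⟨rfl, hj⟩ := Sigma.mk.inj_iff.1 (Option.some.inj h)
    exact ⟨rfl, by rw [Fin.mk.inj_iff.1 (eq_of_heq hj)]⟩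
  all_goals simp_all

theorem kCycleGraph_adj_kCyclePos_succ {i : Fin k} {p : ℕ} (hc : 0 < c i) (hp : p ≤ c i) :
    (kCycleGraph c).Adj (kCyclePos c i p) (kCyclePos c i (p + 1)) := by
  rcases p with _ | p
  · simp [kCyclePos, hc, kCycleGraph, kCycleRel]
  · by_cases hp' : p + 1 < c i
    · simp [kCyclePos, hp', show p < c i by omega, kCycleGraph, kCycleRel]
    · simp only [kCycleGraph, kCyclePos, show p < c i by omega, ↓reduceDIte, hp',
        SimpleGraph.fromRel_adj, ne_eq, reduceCtorEq, not_false_eq_true, kCycleRel, false_or,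
        true_and]
      omega

theorem eq_kCyclePos_of_adj {i : Fin k} {p : ℕ} (h1 : 1 ≤ p) (h2 : p ≤ c i)
    {w : KCycleVertex c} (h : (kCycleGraph c).Adj (kCyclePos c i p) w) :
    w = kCyclePos c i (p - 1) ∨ w = kCyclePos c i (p + 1) := by
  obtain ⟨p, rfl⟩ := Nat.exists_eq_add_of_le' h1
  rw [show kCyclePos c i (p + 1) = some ⟨i, ⟨p, by omega⟩⟩ from kCyclePos_succ ⟨p, _⟩] at h
  rcases w with _ | ⟨i', j'⟩
  · have : p = 0 ∨ p = c i - 1 := by simpa [kCycleGraph, kCycleRel] using h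
    rcases this with rfl | rfl
    · simp
    · exact Or.inr (by rw [show c i - 1 + 1 + 1 = c i + 1 by omega, kCyclePos_succ_self])
  · have : i = i' ∧ (j' : ℕ) = p + 1 ∨ i' = i ∧ p = j' + 1 := by
      simpa [kCycleGraph, kCycleRel] using h.2
    obtain ⟨rfl, hj⟩ | ⟨rfl, hj⟩ := this
    · simp [kCyclePos, ← hj]
    · simp [kCyclePos, hj]

def kCycleEnd (c : Fin k → ℕ) : Fin k ⊕ Fin k → KCycleVertex c :=
  Sum.elim (fun i => kCyclePos c i 1) (fun i => kCyclePos c i (c i))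

def InformedFromLeft (c : Fin k → ℕ) (par : KCycleVertex c → KCycleVertex c) (i : Fin k)
    (p : ℕ) : Prop :=
  par (kCyclePos c i p) = kCyclePos c i (p - 1)

instance {par : KCycleVertex c → KCycleVertex c} {i : Fin k} :
    DecidablePred (InformedFromLeft c par i) :=
  fun _ => inferInstanceAs (Decidable (_ = _))

def kCycleLeftCount (c : Fin k → ℕ) (par : KCycleVertex c → KCycleVertex c) (i : Fin k) : ℕ :=
  #{p ∈ Icc 1 (c i) | InformedFromLeft c par i p}

def kCycleRightCount (c : Fin k → ℕ) (par : KCycleVertex c → KCycleVertex c) (i : Fin k) : ℕ :=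
  #{p ∈ Icc 1 (c i) | ¬ InformedFromLeft c par i p}

theorem kCycleLeftCount_add_rightCount (par : KCycleVertex c → KCycleVertex c) (i : Fin k) :
    kCycleLeftCount c par i + kCycleRightCount c par i = c i := by
  rw [kCycleLeftCount, kCycleRightCount, card_filter_add_card_filter_not, Nat.card_Icc,
    Nat.add_sub_cancel]

namespace IsBroadcastScheme

variable {τ : KCycleVertex c → ℕ} {par : KCycleVertex c → KCycleVertex c} {i : Fin k} {p : ℕ}

theorem par_kCyclePos (hs : IsBroadcastScheme (kCycleGraph c) none τ par) (h1 : 1 ≤ p)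
    (h2 : p ≤ c i) :
    par (kCyclePos c i p) = kCyclePos c i (p - 1) ∨ par (kCyclePos c i p) = kCyclePos c i (p + 1) :=
  eq_kCyclePos_of_adj h1 h2 (hs.2.1 _ (kCyclePos_ne_none h1 h2)).1.symm

theorem tau_par_kCyclePos_lt (hs : IsBroadcastScheme (kCycleGraph c) none τ par) (h1 : 1 ≤ p)
    (h2 : p ≤ c i) : τ (par (kCyclePos c i p)) < τ (kCyclePos c i p) :=
  (hs.2.1 _ (kCyclePos_ne_none h1 h2)).2

theorem informedFromLeft_of_succ (hs : IsBroadcastScheme (kCycleGraph c) none τ par)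
    (h1 : 1 ≤ p) (h2 : p + 1 ≤ c i) (h : InformedFromLeft c par i (p + 1)) :
    InformedFromLeft c par i p := by
  have hlt := hs.tau_par_kCyclePos_lt (p := p + 1) (by omega) h2
  rw [h, Nat.add_sub_cancel] at hlt
  refine (hs.par_kCyclePos (i := i) h1 (by omega)).resolve_right fun h' => ?_
  have := hs.tau_par_kCyclePos_lt (i := i) h1 (by omega)
  rw [h'] at this
  omega

theorem informedFromLeft_of_le (hs : IsBroadcastScheme (kCycleGraph c) none τ par) {q : ℕ}
    (hq : 1 ≤ q) (hqp : q ≤ p) (hp : p ≤ c i) (h : InformedFromLeft c par i p) :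
    InformedFromLeft c par i q := by
  induction p, hqp using Nat.le_induction with
  | base => exact h
  | succ p hqp ih => exact ih (by omega) (hs.informedFromLeft_of_succ (by omega) hp h)

theorem tau_first_add_le (hs : IsBroadcastScheme (kCycleGraph c) none τ par) (h1 : 1 ≤ p)
    (h2 : p ≤ c i) (h : InformedFromLeft c par i p) :
    τ (kCyclePos c i 1) + (p - 1) ≤ τ (kCyclePos c i p) := by
  induction p, h1 using Nat.le_induction with
  | base => simp
  | succ p hp ih =>
    have := ih (by omega) (hs.informedFromLeft_of_succ hp h2 h)
    have hlt := hs.tau_par_kCyclePos_lt (p := p + 1) (by omega) h2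
    rw [h, Nat.add_sub_cancel] at hlt
    omega

theorem tau_last_add_le (hs : IsBroadcastScheme (kCycleGraph c) none τ par) (h1 : 1 ≤ p)
    (h2 : p ≤ c i) (h : ¬ InformedFromLeft c par i p) :
    τ (kCyclePos c i (c i)) + (c i - p) ≤ τ (kCyclePos c i p) := by
  obtain ⟨n, hn⟩ : ∃ n, c i - p = n := ⟨_, rfl⟩
  induction n generalizing p with
  | zero => rw [show p = c i by omega]; simp
  | succ n ih =>
    have := ih (p := p + 1) (by omega) (by omega)
      (fun h' => h (hs.informedFromLeft_of_succ h1 (by omega) h')) (by omega)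
    have hlt := hs.tau_par_kCyclePos_lt h1 h2
    rw [(hs.par_kCyclePos h1 h2).resolve_left h] at hlt
    omega

theorem kCycleLeftCount_le (hs : IsBroadcastScheme (kCycleGraph c) none τ par) {B : ℕ}
    (hb : ∀ v, τ v ≤ B) : kCycleLeftCount c par i ≤ B + 1 - τ (kCyclePos c i 1) := by
  calc kCycleLeftCount c par i ≤ #(Icc 1 (B + 1 - τ (kCyclePos c i 1))) := by
        refine card_le_card fun p hp => ?_
        obtain ⟨hp, hl⟩ := mem_filter.1 hp
        rw [mem_Icc] at hp ⊢
        have := hs.tau_first_add_le hp.1 hp.2 hl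
        have := hb (kCyclePos c i p)
        omega
    _ = B + 1 - τ (kCyclePos c i 1) := by simp

theorem kCycleRightCount_le (hs : IsBroadcastScheme (kCycleGraph c) none τ par) {B : ℕ}
    (hb : ∀ v, τ v ≤ B) : kCycleRightCount c par i ≤ B + 1 - τ (kCyclePos c i (c i)) := by
  calc kCycleRightCount c par i ≤ #(range (B + 1 - τ (kCyclePos c i (c i)))) := by
        refine card_le_card_of_injOn (fun p => c i - p) (fun p hp => ?_) fun p hp q hq hpq => ?_
        · obtain ⟨hp, hl⟩ := mem_filter.1 hp
          rw [mem_Icc] at hp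
          have := hs.tau_last_add_le hp.1 hp.2 hl
          have := hb (kCyclePos c i p)
          simp only [coe_range, Set.mem_Iio]
          omega
        · simp only [coe_filter, mem_Icc, Set.mem_ofPred_eq] at hp hq hpq
          omega
    _ = B + 1 - τ (kCyclePos c i (c i)) := card_range _

theorem kCycleEnd_inl_mem_children (hs : IsBroadcastScheme (kCycleGraph c) none τ par)
    (h : kCycleLeftCount c par i ≠ 0) : kCycleEnd c (.inl i) ∈ {v | v ≠ none ∧ par v = none} := by
  obtain ⟨p, hp⟩ := card_ne_zero.1 h
  obtain ⟨hp, hl⟩ := mem_filter.1 hp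
  rw [mem_Icc] at hp
  exact ⟨kCyclePos_ne_none le_rfl (hp.1.trans hp.2),
    hs.informedFromLeft_of_le le_rfl hp.1 hp.2 hl⟩

theorem kCycleEnd_inr_mem_children (hs : IsBroadcastScheme (kCycleGraph c) none τ par)
    (h : kCycleRightCount c par i ≠ 0) : kCycleEnd c (.inr i) ∈ {v | v ≠ none ∧ par v = none} := by
  obtain ⟨p, hp⟩ := card_ne_zero.1 h
  obtain ⟨hp, hl⟩ := mem_filter.1 hp
  rw [mem_Icc] at hp
  refine ⟨kCyclePos_ne_none (hp.1.trans hp.2) le_rfl, ?_⟩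
  have hlast : ¬ InformedFromLeft c par i (c i) := fun h' =>
    hl (hs.informedFromLeft_of_le hp.1 hp.2 le_rfl h')
  rw [kCycleEnd, Sum.elim_inr, (hs.par_kCyclePos (hp.1.trans hp.2) le_rfl).resolve_left hlast,
    kCyclePos_succ_self]

theorem kCycle_bijOn_counts (hs : IsBroadcastScheme (kCycleGraph c) none τ par)
    (hb : ∀ v, τ v ≤ 2 * k) (hsum : ∑ i, c i = k * (2 * k + 1)) :
    Set.BijOn (Sum.elim (kCycleLeftCount c par) (kCycleRightCount c par)) Set.univ
      (Set.Icc 1 (2 * k)) := by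
  have hcard : Fintype.card (Fin k ⊕ Fin k) = 2 * k := by simp [two_mul]
  have hchild : ∀ e, Sum.elim (kCycleLeftCount c par) (kCycleRightCount c par) e ≠ 0 →
      kCycleEnd c e ∈ {v | v ≠ none ∧ par v = none} := by
    rintro (i | i) he
    exacts [hs.kCycleEnd_inl_mem_children he, hs.kCycleEnd_inr_mem_children he]
  rw [← hcard]
  refine bijOn_Icc_of_le_of_sum_eq (y := fun e => 2 * k + 1 - τ (kCycleEnd c e)) ?_ ?_ ?_ ?_
  · rintro (i | i)
    exacts [hs.kCycleLeftCount_le hb, hs.kCycleRightCount_le hb]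
  · intro e he
    have := hs.pos_of_ne (hchild e he).1
    omega
  · intro e he e' he' h
    have := hb (kCycleEnd c e)
    have := hb (kCycleEnd c e')
    have hend := hs.2.2 none (hchild e he) (hchild e' he') (by simp only at h; omega)
    have hne := (hchild e he).1
    rcases e with i | i <;> rcases e' with i' | i' <;>
      simp only [kCycleEnd, Sum.elim_inl, Sum.elim_inr, Set.mem_ofPred_eq] at hend hne he he' <;>
      obtain ⟨rfl, hp⟩ := kCyclePos_eq_kCyclePos hend hne
    · rfl
    · have := kCycleLeftCount_add_rightCount par i; omega
    · have := kCycleLeftCount_add_rightCount par i; omega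
    · rfl
  · rw [Fintype.sum_sum_type, ← sum_add_distrib, hcard, sum_Icc_one_two_mul, ← hsum]
    exact sum_congr rfl fun i _ => kCycleLeftCount_add_rightCount par i

end IsBroadcastScheme

section Construction

variable (B : ℕ) (a b : Fin k → ℕ)

/-- The first `a i` vertices of cycle `i` hear the message from its first end, which the center
informs at time `B + 1 - a i`; the other `b i` from its last end, informed at time `B + 1 - b i`. -/
def kCycleTime (c : Fin k → ℕ) : KCycleVertex c → ℕ
  | none => 0
  | some ⟨i, j⟩ => if (j : ℕ) < a i then B - a i + j + 1 else B - b i + (c i - j)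

def kCycleParent (c : Fin k → ℕ) : KCycleVertex c → KCycleVertex c
  | none => none
  | some ⟨i, j⟩ => if (j : ℕ) < a i then kCyclePos c i j else kCyclePos c i (j + 2)

variable {B a b}

theorem kCycleTime_le (hab : ∀ i, a i + b i = c i) (ha : ∀ i, a i ≤ B) (hb : ∀ i, b i ≤ B) :
    ∀ v, kCycleTime B a b c v ≤ B := by
  rintro (_ | ⟨i, j⟩)
  · exact Nat.zero_le _
  · have := hab i; have := ha i; have := hb i; have := j.isLt
    simp only [kCycleTime]
    split_ifs <;> omega

theorem kCycleTime_kCyclePos {i : Fin k} {p : ℕ} (h1 : 1 ≤ p) (h2 : p ≤ c i) :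
    kCycleTime B a b c (kCyclePos c i p) =
      if p ≤ a i then B - a i + p else B - b i + (c i + 1 - p) := by
  obtain ⟨j, rfl⟩ := Nat.exists_eq_add_of_le' h1
  rw [kCyclePos_succ ⟨j, by omega⟩]
  simp only [kCycleTime, Nat.lt_iff_add_one_le]
  split_ifs <;> omega

theorem kCycleParent_kCyclePos {i : Fin k} {p : ℕ} (h1 : 1 ≤ p) (h2 : p ≤ c i) :
    kCycleParent a c (kCyclePos c i p) =
      if p ≤ a i then kCyclePos c i (p - 1) else kCyclePos c i (p + 1) := by
  obtain ⟨j, rfl⟩ := Nat.exists_eq_add_of_le' h1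
  rw [kCyclePos_succ ⟨j, by omega⟩]
  simp only [kCycleParent, Nat.lt_iff_add_one_le, Nat.add_sub_cancel]

theorem kCycleParent_adj_and_time_lt {v : KCycleVertex c} (hv : v ≠ none) :
    (kCycleGraph c).Adj (kCycleParent a c v) v ∧
      kCycleTime B a b c (kCycleParent a c v) < kCycleTime B a b c v := by
  rcases v with _ | ⟨i, j⟩
  · exact absurd rfl hv
  have hj := j.isLt
  rw [← kCyclePos_succ, kCycleParent_kCyclePos le_add_self hj,
    kCycleTime_kCyclePos le_add_self hj]
  split_ifs with hja
  · refine ⟨kCycleGraph_adj_kCyclePos_succ (by omega) hj.le, ?_⟩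
    rcases Nat.eq_zero_or_pos (j : ℕ) with h0 | h0
    · rw [Nat.add_sub_cancel, h0]; simp only [kCyclePos_zero, kCycleTime]; omega
    · rw [kCycleTime_kCyclePos (by omega) (by omega), if_pos (by omega)]; omega
  · refine ⟨(kCycleGraph_adj_kCyclePos_succ (by omega) hj).symm, ?_⟩
    obtain hc | hc : (j : ℕ) + 1 = c i ∨ (j : ℕ) + 1 < c i := by omega
    · rw [hc, kCyclePos_succ_self]; simp only [kCycleTime]; omega
    · rw [kCycleTime_kCyclePos (by omega) hc, if_neg (by omega)]; omega

theorem kCycleEnd_of_kCycleParent_eq_none (ha : ∀ i, a i ≤ B) (hb : ∀ i, b i ≤ B)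
    {v : KCycleVertex c} (hv : v ≠ none) (h : kCycleParent a c v = none) :
    ∃ e, v = kCycleEnd c e ∧ kCycleTime B a b c v = B + 1 - Sum.elim a b e := by
  rcases v with _ | ⟨i, j⟩
  · exact absurd rfl hv
  have hj := j.isLt
  rw [← kCyclePos_succ] at h ⊢
  rw [kCycleParent_kCyclePos le_add_self hj] at h
  rw [kCycleTime_kCyclePos le_add_self hj]
  split_ifs at h ⊢ with hja
  · have h0 : (j : ℕ) = 0 := by
      by_contra h0
      exact kCyclePos_ne_none (by omega) (by omega) h
    refine ⟨.inl i, by rw [h0]; rfl, ?_⟩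
    have := ha i
    simp only [Sum.elim_inl]
    omega
  · have hc : (j : ℕ) + 1 = c i := by
      by_contra hc
      exact kCyclePos_ne_none (by omega) (by omega) h
    refine ⟨.inr i, by rw [hc]; rfl, ?_⟩
    have := hb i
    simp only [Sum.elim_inr]
    omega

theorem kCycle_isBroadcastScheme (ha : ∀ i, a i ≤ B) (hb : ∀ i, b i ≤ B)
    (hinj : Function.Injective (Sum.elim a b)) :
    IsBroadcastScheme (kCycleGraph c) none (kCycleTime B a b c) (kCycleParent a c) := by
  have hpar : ∀ v, v ≠ none → (kCycleGraph c).Adj (kCycleParent a c v) v ∧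
      kCycleTime B a b c (kCycleParent a c v) < kCycleTime B a b c v :=
    fun _ => kCycleParent_adj_and_time_lt
  refine ⟨rfl, hpar, ?_⟩
  rintro (_ | ⟨i, j⟩)
  · rintro v ⟨hv, hpv⟩ w ⟨hw, hpw⟩ hvw
    obtain ⟨e, rfl, hve⟩ := kCycleEnd_of_kCycleParent_eq_none ha hb hv hpv
    obtain ⟨e', rfl, hwe⟩ := kCycleEnd_of_kCycleParent_eq_none ha hb hw hpw
    have : Sum.elim a b e ≤ B := by rcases e with i | i; exacts [ha i, hb i]
    have : Sum.elim a b e' ≤ B := by rcases e' with i | i; exacts [ha i, hb i]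
    rw [hinj (show Sum.elim a b e = Sum.elim a b e' by omega)]
  · rw [← kCyclePos_succ]
    exact (subsingleton_children_of_adj_eq_or hpar (kCyclePos_ne_none le_add_self
      (Nat.succ_le_of_lt j.isLt)) fun w => eq_kCyclePos_of_adj le_add_self
      (Nat.succ_le_of_lt j.isLt)).injOn _

end Construction

theorem kCycle_broadcast_iff_evenOdd_general (m : ℕ) (c : Fin m → ℕ)
    (hodd : ∀ i, Odd (c i))
    (hsum : ∑ i, c i = m * (2 * m + 1)) :
    (∃ (τ : Option ((i : Fin m) × Fin (c i)) → ℕ)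
       (par : Option ((i : Fin m) × Fin (c i)) → Option ((i : Fin m) × Fin (c i))),
        IsBroadcastScheme (kCycleGraph c) none τ par ∧ ∀ v, τ v ≤ 2 * m) ↔
    (∃ α β : Fin m → ℕ,
        Set.BijOn α Set.univ {x | Even x ∧ x ∈ Set.Icc 1 (2 * m)} ∧
        Set.BijOn β Set.univ {x | Odd x ∧ x ∈ Set.Icc 1 (2 * m)} ∧
        ∀ i, α i + β i = c i) := by
  constructor
  · rintro ⟨τ, par, hs, hb⟩
    obtain ⟨α, β, hα, hβ, hαβ⟩ := exists_even_odd_of_bijOn_sumElim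
      (hs.kCycle_bijOn_counts hb hsum) fun i => kCycleLeftCount_add_rightCount par i ▸ hodd i
    exact ⟨α, β, hα, hβ, fun i => (hαβ i).trans (kCycleLeftCount_add_rightCount par i)⟩
  · rintro ⟨α, β, hα, hβ, hαβ⟩
    have hinj : Function.Injective (Sum.elim α β) :=
      (Set.injOn_univ.1 hα.injOn).sumElim (Set.injOn_univ.1 hβ.injOn)
        fun i j h => Nat.not_even_iff_odd.2 (hβ.mapsTo (Set.mem_univ j)).1
          (h ▸ (hα.mapsTo (Set.mem_univ i)).1)
    have hα2 i : α i ≤ 2 * m := (hα.mapsTo (Set.mem_univ i)).2.2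
    have hβ2 i : β i ≤ 2 * m := (hβ.mapsTo (Set.mem_univ i)).2.2
    exact ⟨_, _, kCycle_isBroadcastScheme hα2 hβ2 hinj, kCycleTime_le hαβ hα2 hβ2⟩

/-- For odd `cᵢ ≥ 3` summing to `m(2m+1)`, the `m`-cycle graph
`G(c₁, …, c_m)` with source the center admits a broadcast scheme completing within
`2m` rounds iff there are bijections `α` from `{1, …, m}` onto the even numbers of
`{1, …, 2m}` and `β` onto the odd numbers of `{1, …, 2m}` with `α i + β i = cᵢ`. -/
theorem kCycle_broadcast_iff_evenOdd (m : ℕ) (hm : 1 ≤ m) (c : Fin m → ℕ)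
    (hodd : ∀ i, Odd (c i)) (hc3 : ∀ i, 3 ≤ c i)
    (hsum : ∑ i, c i = m * (2 * m + 1)) :
    (∃ (τ : Option ((i : Fin m) × Fin (c i)) → ℕ)
       (par : Option ((i : Fin m) × Fin (c i)) → Option ((i : Fin m) × Fin (c i))),
        IsBroadcastScheme (kCycleGraph c) none τ par ∧ ∀ v, τ v ≤ 2 * m) ↔
    (∃ α β : Fin m → ℕ,
        Set.BijOn α Set.univ {x | Even x ∧ x ∈ Set.Icc 1 (2 * m)} ∧
        Set.BijOn β Set.univ {x | Odd x ∧ x ∈ Set.Icc 1 (2 * m)} ∧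
        ∀ i, α i + β i = c i) :=
  kCycle_broadcast_iff_evenOdd_general m c hodd hsum
end

section
/- Let m ≥ 1, let w_1,…,w_m be positive integers, and let e be an integer with Σ_{i=1}^m w_i + m(m+1) = m·e. Define c_i = 2e − 2w_i − 1 for each i ∈ {1,…,m}. Then Σ_{i=1}^m c_i = m(2m+1), and there exist permutations λ and μ of {1,…,m} with λ(i)+μ(i)+w_i = e for all i if and only if there exist a bijection α from {1,…,m} onto the even numbers {2,4,…,2m} and a bijection β from {1,…,m} onto the odd numbers {1,3,…,2m−1} such that α(i)+β(i) = c_i for all i. -/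
/-!
Doubling identifies `{1, …, m}` with the even numbers of `{1, …, 2m}`, and `x ↦ 2x - 1`
identifies it with the odd ones. Doubling `λ i + μ i + wᵢ = e` turns a solution `(λ, μ)` of
RN3DM into the solution `(2λ, 2μ - 1)` of Even-Odd RN3DM for `cᵢ = 2e - 2wᵢ - 1`, and halving
back, `(α, β) ↦ (α / 2, (β + 1) / 2)`, inverts this.
-/

open Set

section Parity

variable (m : ℤ)

theorem invOn_div_two_two_mul :
    InvOn (· / 2) (2 * ·) (Icc 1 m) {x : ℤ | Even x ∧ x ∈ Icc 1 (2 * m)} := by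
  constructor <;> intro x <;> simp only [mem_ofPred_eq, mem_Icc, Int.even_iff] <;> omega

theorem invOn_add_one_div_two_two_mul_sub_one :
    InvOn (fun x => (x + 1) / 2) (2 * · - 1) (Icc 1 m)
      {x : ℤ | Odd x ∧ x ∈ Icc 1 (2 * m)} := by
  constructor <;> intro x <;> simp only [mem_ofPred_eq, mem_Icc, Int.odd_iff] <;> omega

theorem mapsTo_two_mul :
    MapsTo (2 * ·) (Icc 1 m) {x : ℤ | Even x ∧ x ∈ Icc 1 (2 * m)} := by
  intro x; simp only [mem_ofPred_eq, mem_Icc, Int.even_iff]; omega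

theorem mapsTo_div_two :
    MapsTo (· / 2) {x : ℤ | Even x ∧ x ∈ Icc 1 (2 * m)} (Icc 1 m) := by
  intro x; simp only [mem_ofPred_eq, mem_Icc, Int.even_iff]; omega

theorem mapsTo_two_mul_sub_one :
    MapsTo (2 * · - 1) (Icc 1 m) {x : ℤ | Odd x ∧ x ∈ Icc 1 (2 * m)} := by
  intro x; simp only [mem_ofPred_eq, mem_Icc, Int.odd_iff]; omega

theorem mapsTo_add_one_div_two :
    MapsTo (fun x => (x + 1) / 2) {x : ℤ | Odd x ∧ x ∈ Icc 1 (2 * m)} (Icc 1 m) := by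
  intro x; simp only [mem_ofPred_eq, mem_Icc, Int.odd_iff]; omega

theorem bijOn_two_mul : BijOn (2 * ·) (Icc 1 m) {x : ℤ | Even x ∧ x ∈ Icc 1 (2 * m)} :=
  (invOn_div_two_two_mul m).bijOn (mapsTo_two_mul m) (mapsTo_div_two m)

theorem bijOn_div_two : BijOn (· / 2) {x : ℤ | Even x ∧ x ∈ Icc 1 (2 * m)} (Icc 1 m) :=
  (invOn_div_two_two_mul m).symm.bijOn (mapsTo_div_two m) (mapsTo_two_mul m)

theorem bijOn_two_mul_sub_one :
    BijOn (2 * · - 1) (Icc 1 m) {x : ℤ | Odd x ∧ x ∈ Icc 1 (2 * m)} :=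
  (invOn_add_one_div_two_two_mul_sub_one m).bijOn (mapsTo_two_mul_sub_one m)
    (mapsTo_add_one_div_two m)

theorem bijOn_add_one_div_two :
    BijOn (fun x => (x + 1) / 2) {x : ℤ | Odd x ∧ x ∈ Icc 1 (2 * m)} (Icc 1 m) :=
  (invOn_add_one_div_two_two_mul_sub_one m).symm.bijOn (mapsTo_add_one_div_two m)
    (mapsTo_two_mul_sub_one m)

end Parity

theorem RN3DM_iff_evenOdd_RN3DM_general (m : ℕ) (w : Fin m → ℤ)
    (e : ℤ) (he : ∑ i, w i + m * (m + 1) = m * e) :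
    (∑ i, (2 * e - 2 * w i - 1) = m * (2 * m + 1)) ∧
    ((∃ lam mu : Fin m → ℤ,
        Set.BijOn lam Set.univ (Set.Icc (1 : ℤ) m) ∧
        Set.BijOn mu Set.univ (Set.Icc (1 : ℤ) m) ∧
        ∀ i, lam i + mu i + w i = e) ↔
      (∃ α β : Fin m → ℤ,
        Set.BijOn α Set.univ {x : ℤ | Even x ∧ x ∈ Set.Icc (1 : ℤ) (2 * m)} ∧
        Set.BijOn β Set.univ {x : ℤ | Odd x ∧ x ∈ Set.Icc (1 : ℤ) (2 * m)} ∧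
        ∀ i, α i + β i = 2 * e - 2 * w i - 1)) := by
  refine ⟨?_, ⟨?_, ?_⟩⟩
  · simp only [Finset.sum_sub_distrib, ← Finset.mul_sum, Finset.sum_const, Finset.card_univ,
      Fintype.card_fin, nsmul_eq_mul]
    linear_combination -2 * he
  · rintro ⟨lam, mu, hlam, hmu, hsum⟩
    exact ⟨(2 * lam ·), (2 * mu · - 1), (bijOn_two_mul m).comp hlam,
      (bijOn_two_mul_sub_one m).comp hmu, fun i => by linarith [hsum i]⟩
  · rintro ⟨α, β, hα, hβ, hsum⟩
    refine ⟨fun i => α i / 2, fun i => (β i + 1) / 2, (bijOn_div_two m).comp hα,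
      (bijOn_add_one_div_two m).comp hβ, fun i => ?_⟩
    have hαi := Int.even_iff.mp (hα.mapsTo (mem_univ i)).1
    have hβi := Int.odd_iff.mp (hβ.mapsTo (mem_univ i)).1
    have hαβ := hsum i
    dsimp only
    omega

/-- The reduction from RN3DM to Even-Odd RN3DM: with
`∑ wᵢ + m(m+1) = m·e` and `cᵢ = 2e − 2wᵢ − 1`, we have `∑ cᵢ = m(2m+1)`, and
permutations `λ, μ` of `{1, …, m}` with `λ i + μ i + wᵢ = e` exist iff bijections
`α` onto the even numbers and `β` onto the odd numbers of `{1, …, 2m}` with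
`α i + β i = cᵢ` exist. -/
theorem RN3DM_iff_evenOdd_RN3DM (m : ℕ) (hm : 1 ≤ m) (w : Fin m → ℤ)
    (hw : ∀ i, 1 ≤ w i) (e : ℤ) (he : ∑ i, w i + m * (m + 1) = m * e) :
    (∑ i, (2 * e - 2 * w i - 1) = m * (2 * m + 1)) ∧
    ((∃ lam mu : Fin m → ℤ,
        Set.BijOn lam Set.univ (Set.Icc (1 : ℤ) m) ∧
        Set.BijOn mu Set.univ (Set.Icc (1 : ℤ) m) ∧
        ∀ i, lam i + mu i + w i = e) ↔
      (∃ α β : Fin m → ℤ,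
        Set.BijOn α Set.univ {x : ℤ | Even x ∧ x ∈ Set.Icc (1 : ℤ) (2 * m)} ∧
        Set.BijOn β Set.univ {x : ℤ | Odd x ∧ x ∈ Set.Icc (1 : ℤ) (2 * m)} ∧
        ∀ i, α i + β i = 2 * e - 2 * w i - 1)) :=
  RN3DM_iff_evenOdd_RN3DM_general m w e he
end

section
/- Let k ≥ 1 and let c_1,…,c_k be integers with c_i ≥ 3, let G be the k-cycle graph G(c_1,…,c_k) with center r, let the source be s = r, and let S be the multiset {c_1,…,c_k}. Then for every positive integer b, G admits a broadcast scheme from s completing within b rounds if and only if the set [b] = {1,2,…,b} covers S. Consequently, the minimum number of rounds needed to broadcast from s in G equals the Prefix Covering optimum OPT(S). -/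
/-- `C` covers `S`: the elements of `S` can be matched to pairwise disjoint
submultisets of `C` (the unused part of `C` playing the role of `C₀`), each
matched submultiset having size at most `2` and sum at least the matched element. -/
def Covers (C S : Multiset ℕ) : Prop :=
  ∃ T : Multiset (ℕ × Multiset ℕ),
    T.map Prod.fst = S ∧
    (T.map Prod.snd).sum ≤ C ∧
    ∀ q ∈ T, (Prod.snd q).card ≤ 2 ∧ Prod.fst q ≤ (Prod.snd q).sum

/-- The Prefix Covering optimum: the least `m` such that `[m] = {1, …, m}` covers `S`. -/
noncomputable def prefixOPT (S : Multiset ℕ) : ℕ :=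
  sInf {m | Covers (Finset.Icc 1 m).val S}

/-!
Every vertex of the `i`-th cycle is reached along the cycle from one of its two ends that the
center informs directly. An end informed in round `τ` reaches at most `b + 1 - τ` vertices by
round `b`, and these budgets are distinct elements of `[b]` because the center informs one
neighbour per round; so the budgets of the two ends of each cycle form a cover of `{c₁, …, c_k}`
by `[b]`. Conversely, from parts `x`, `y` covering `c i`, let the center inform the ends of the
`i`-th cycle in rounds `b + 1 - x` and `b + 1 - y` and fill the cycle from both sides.
-/

open Finset

theorem Multiset.exists_eq_filter_pair_ne_zero {m : Multiset ℕ} (hm : m.card ≤ 2)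
    (h0 : 0 ∉ m) : ∃ x y, m = ({x, y} : Multiset ℕ).filter (· ≠ 0) := by
  obtain ⟨x, y, hxy⟩ := Multiset.card_eq_two.mp
    (show (m + Multiset.replicate (2 - m.card) 0).card = 2 by simp; omega)
  refine ⟨x, y, ?_⟩
  rw [← hxy, Multiset.filter_add,
    Multiset.filter_eq_self.mpr fun a ha => ne_of_mem_of_not_mem ha h0,
    Multiset.filter_eq_nil.mpr fun a ha => by simp [Multiset.eq_of_mem_replicate ha], add_zero]

theorem Multiset.sum_filter_ne_zero {M : Type*} [AddCommMonoid M] [DecidableEq M]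
    (m : Multiset M) : (m.filter (· ≠ 0)).sum = m.sum := by
  induction m using Multiset.induction_on with
  | empty => simp
  | cons a m ih => by_cases ha : a = 0 <;> simp [ha, ih]

theorem Finset.exists_map_pair_of_map_fst_eq {α β γ : Type*} [Inhabited γ]
    (s : Finset α) (f : α → β) (T : Multiset (β × γ)) (hT : T.map Prod.fst = s.val.map f) :
    ∃ g : α → γ, T = s.val.map fun a => (f a, g a) := by
  classical
  induction s using Finset.induction_on generalizing T with
  | empty => exact ⟨default, by simpa using hT⟩
  | insert a s has ih =>
    rw [Finset.insert_val_of_notMem has, Multiset.map_cons] at hT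
    obtain ⟨p, hpT, hp⟩ := Multiset.mem_map.mp (hT ▸ Multiset.mem_cons_self _ _)
    rw [← Multiset.cons_erase hpT, Multiset.map_cons, hp, Multiset.cons_inj_right] at hT
    obtain ⟨g, hg⟩ := ih _ hT
    refine ⟨Function.update g a p.2, ?_⟩
    rw [Finset.insert_val_of_notMem has, Multiset.map_cons, Function.update_self, ← hp,
      ← Multiset.cons_erase hpT, hg]
    congr 1
    exact Multiset.map_congr rfl fun x hx => by
      rw [Function.update_of_ne (ne_of_mem_of_not_mem hx has)]

theorem covers_univ_map_iff {ι : Type*} [Fintype ι] (C : Multiset ℕ) (c : ι → ℕ) :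
    Covers C (univ.val.map c) ↔
      ∃ D : ι → Multiset ℕ, ∑ i, D i ≤ C ∧ ∀ i, (D i).card ≤ 2 ∧ c i ≤ (D i).sum := by
  classical
  constructor
  · rintro ⟨T, hfst, hle, hT⟩
    obtain ⟨D, rfl⟩ := univ.exists_map_pair_of_map_fst_eq c T hfst
    exact ⟨D, by simpa [Multiset.map_map] using hle,
      fun i => hT (c i, D i) (Multiset.mem_map.mpr ⟨i, mem_univ _, rfl⟩)⟩
  · rintro ⟨D, hle, hD⟩
    refine ⟨univ.val.map fun i => (c i, D i), by simp [Multiset.map_map], ?_, ?_⟩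
    · simpa [Multiset.map_map] using hle
    · simpa using hD

section PairCover

variable {ι : Type*}

/-- `w (i, false)` and `w (i, true)` are the (at most two) parts assigned to `i`, the value `0`
meaning that the part is absent. -/
def IsPairCover (c : ι → ℕ) (b : ℕ) (w : ι × Bool → ℕ) : Prop :=
  (∀ p, w p ≤ b) ∧ Set.InjOn w {p | w p ≠ 0} ∧ ∀ i, c i ≤ w (i, false) + w (i, true)

def pairParts (w : ι × Bool → ℕ) (i : ι) : Multiset ℕ :=
  ({w (i, false), w (i, true)} : Multiset ℕ).filter (· ≠ 0)

theorem pairParts_sum (w : ι × Bool → ℕ) (i : ι) :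
    (pairParts w i).sum = w (i, false) + w (i, true) := by
  simp [pairParts, Multiset.sum_filter_ne_zero]

theorem sum_pairParts [Fintype ι] (w : ι × Bool → ℕ) :
    ∑ i, pairParts w i = (univ.val.map w).filter (· ≠ 0) := by
  have hsum : ∑ i, ({w (i, false), w (i, true)} : Multiset ℕ) = univ.val.map w := by
    rw [← Multiset.sum_map_singleton (univ.val.map w), Multiset.map_map, sum_map_val,
      Fintype.sum_prod_type]
    simp [Multiset.insert_eq_cons, ← Multiset.singleton_add, add_comm]
  let filterNeZero : Multiset ℕ →+ Multiset ℕ :=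
    ⟨⟨Multiset.filter (· ≠ 0), Multiset.filter_zero _⟩, Multiset.filter_add _⟩
  rw [← hsum]
  exact (map_sum filterNeZero (fun i => ({w (i, false), w (i, true)} : Multiset ℕ)) univ).symm

theorem nodup_filter_map_iff_injOn [Fintype ι] (w : ι × Bool → ℕ) :
    ((univ.val.map w).filter (· ≠ 0)).Nodup ↔ Set.InjOn w {p | w p ≠ 0} := by
  rw [Multiset.filter_map]
  refine ⟨fun h p hp q hq hpq => ?_, fun h => ?_⟩
  · exact Multiset.inj_on_of_nodup_map h p (by simpa using hp) q (by simpa using hq) hpq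
  · exact (Multiset.Nodup.filter _ univ.nodup).map_on fun p hp q hq =>
      h (by simpa using hp) (by simpa using hq)

theorem covers_Icc_iff_exists_isPairCover [Fintype ι] (c : ι → ℕ) (b : ℕ) :
    Covers (Icc 1 b).val (univ.val.map c) ↔ ∃ w, IsPairCover c b w := by
  rw [covers_univ_map_iff]
  constructor
  · rintro ⟨D, hle, hD⟩
    have hmem : ∀ i, ∀ x ∈ D i, x ∈ Icc 1 b := fun i x hx =>
      Multiset.mem_of_le ((single_le_sum (fun _ _ => Multiset.zero_le _) (mem_univ i)).trans hle) hx
    choose x y hxy using fun i => Multiset.exists_eq_filter_pair_ne_zero (hD i).1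
      fun h0 => by simpa using hmem i 0 h0
    set w : ι × Bool → ℕ := fun p => cond p.2 (y p.1) (x p.1)
    have hDw : D = pairParts w := funext hxy
    subst hDw
    refine ⟨w, fun p => ?_, ?_, fun i => pairParts_sum w i ▸ (hD i).2⟩
    · by_cases hp : w p = 0
      · simp [hp]
      obtain ⟨i, t⟩ := p
      have : w (i, t) ∈ pairParts w i := by cases t <;> simpa [pairParts] using hp
      exact (mem_Icc.mp (hmem i _ this)).2
    · rw [← nodup_filter_map_iff_injOn, ← sum_pairParts]
      exact Multiset.nodup_of_le hle (Icc 1 b).nodup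
  · rintro ⟨w, hwb, hinj, hwc⟩
    refine ⟨pairParts w, ?_, fun i => ⟨?_, ?_⟩⟩
    · rw [sum_pairParts, Multiset.le_iff_subset ((nodup_filter_map_iff_injOn w).mpr hinj)]
      intro x hx
      obtain ⟨hx, hx0⟩ := Multiset.mem_filter.mp hx
      obtain ⟨p, -, rfl⟩ := Multiset.mem_map.mp hx
      simpa using ⟨Nat.one_le_iff_ne_zero.mpr hx0, hwb p⟩
    · exact (Multiset.card_le_card (Multiset.filter_le _ _)).trans (by simp)
    · exact pairParts_sum w i ▸ hwc i

end PairCover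

section KCycle

variable {k : ℕ} {c : Fin k → ℕ}

theorem kCycleGraph_adj_none_some {i : Fin k} {j : Fin (c i)} :
    (kCycleGraph c).Adj none (some ⟨i, j⟩) ↔ (j : ℕ) = 0 ∨ (j : ℕ) = c i - 1 := by
  simp [kCycleGraph, kCycleRel]

theorem kCycleGraph_adj_some_some {i i' : Fin k} {j : Fin (c i)} {j' : Fin (c i')} :
    (kCycleGraph c).Adj (some ⟨i, j⟩) (some ⟨i', j'⟩) →
      i = i' ∧ ((j' : ℕ) = j + 1 ∨ (j : ℕ) = j' + 1) := by
  simp only [kCycleGraph, SimpleGraph.fromRel_adj, kCycleRel]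
  rintro ⟨-, ⟨rfl, h⟩ | ⟨rfl, h⟩⟩ <;> simp [h]

theorem kCycleGraph_adj_some_some_iff {i : Fin k} {j j' : Fin (c i)} :
    (kCycleGraph c).Adj (some ⟨i, j⟩) (some ⟨i, j'⟩) ↔ (j' : ℕ) = j + 1 ∨ (j : ℕ) = j' + 1 := by
  simp only [kCycleGraph, SimpleGraph.fromRel_adj, kCycleRel, true_and, ne_eq, Option.some.injEq,
    Sigma.mk.injEq, heq_eq_eq]
  constructor
  · exact fun h => h.2
  · rintro h
    exact ⟨fun h' => by rw [h'] at h; omega, h⟩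

end KCycle

theorem Nat.le_add_of_forall_lt_or_sub_lt {n L R : ℕ} (h : ∀ j < n, j < L ∨ n - 1 - j < R) :
    n ≤ L + R := by
  by_contra! hn
  rcases h L (by omega) with h | h <;> omega

section Forward

variable {k : ℕ} {c : Fin k → ℕ} {τ : Option ((i : Fin k) × Fin (c i)) → ℕ}
  {par : Option ((i : Fin k) × Fin (c i)) → Option ((i : Fin k) × Fin (c i))}

/-- The inequalities say `|j - e| ≤ τ (i, j) - τ (i, e)`. -/
theorem kCycle_exists_center_child_ancestor (hs : IsBroadcastScheme (kCycleGraph c) none τ par)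
    (i : Fin k) (j : Fin (c i)) :
    ∃ e : Fin (c i), par (some ⟨i, e⟩) = none ∧
      τ (some ⟨i, e⟩) + j ≤ τ (some ⟨i, j⟩) + e ∧ τ (some ⟨i, e⟩) + e ≤ τ (some ⟨i, j⟩) + j := by
  induction hn : τ (some ⟨i, j⟩) using Nat.strong_induction_on generalizing j with
  | _ n ih =>
    obtain ⟨hadj, hlt⟩ := hs.2.1 (some ⟨i, j⟩) (Option.some_ne_none _)
    rcases hp : par (some ⟨i, j⟩) with _ | ⟨i', j'⟩
    · exact ⟨j, hp, by omega⟩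
    rw [hp] at hadj hlt
    obtain ⟨rfl, hj⟩ := kCycleGraph_adj_some_some hadj
    obtain ⟨e, he, h₁, h₂⟩ := ih _ (hn ▸ hlt) j' rfl
    exact ⟨e, he, by omega⟩

theorem kCycle_eq_end_of_par_eq_none (hs : IsBroadcastScheme (kCycleGraph c) none τ par)
    {i : Fin k} {j : Fin (c i)} (hj : par (some ⟨i, j⟩) = none) :
    (j : ℕ) = 0 ∨ (j : ℕ) = c i - 1 :=
  kCycleGraph_adj_none_some.mp (hj ▸ (hs.2.1 _ (Option.some_ne_none _)).1)

def cycleEnd (hc : ∀ i, 2 ≤ c i) (p : Fin k × Bool) : Option ((i : Fin k) × Fin (c i)) :=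
  some ⟨p.1, ⟨if p.2 then c p.1 - 1 else 0, by have := hc p.1; split <;> omega⟩⟩

theorem cycleEnd_injective (hc : ∀ i, 2 ≤ c i) : Function.Injective (cycleEnd hc) := by
  rintro ⟨i, t⟩ ⟨i', t'⟩ h
  simp only [cycleEnd, Option.some.injEq, Sigma.mk.injEq] at h
  obtain ⟨rfl, h⟩ := h
  have := hc i
  cases t <;> cases t' <;> simp at h ⊢ <;> omega

theorem isPairCover_of_isBroadcastScheme (hc : ∀ i, 2 ≤ c i)
    (hs : IsBroadcastScheme (kCycleGraph c) none τ par) {b : ℕ} (hb : ∀ v, τ v ≤ b) :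
    IsPairCover c b fun p =>
      if par (cycleEnd hc p) = none then b + 1 - τ (cycleEnd hc p) else 0 := by
  have hpos : ∀ p, 0 < τ (cycleEnd hc p) := fun p => hs.pos_of_ne (Option.some_ne_none _)
  refine ⟨fun p => ?_, fun p hp q hq hpq => ?_, fun i => ?_⟩
  · have := hpos p
    dsimp only
    split_ifs <;> omega
  · obtain ⟨hp, -⟩ := ite_ne_right_iff.mp hp
    obtain ⟨hq, -⟩ := ite_ne_right_iff.mp hq
    dsimp only at hpq
    rw [if_pos hp, if_pos hq] at hpq
    have := hpos p; have := hpos q; have := hb (cycleEnd hc p); have := hb (cycleEnd hc q)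
    have hτ : τ (cycleEnd hc p) = τ (cycleEnd hc q) := by omega
    exact cycleEnd_injective hc
      (hs.2.2 none ⟨Option.some_ne_none _, hp⟩ ⟨Option.some_ne_none _, hq⟩ hτ)
  · refine Nat.le_add_of_forall_lt_or_sub_lt fun j hj => ?_
    obtain ⟨e, he, h₁, h₂⟩ := kCycle_exists_center_child_ancestor hs i ⟨j, hj⟩
    have := hb (some ⟨i, ⟨j, hj⟩⟩)
    dsimp only at h₁ h₂
    rcases kCycle_eq_end_of_par_eq_none hs he with he' | he'
    · have hend : cycleEnd hc (i, false) = some ⟨i, e⟩ := by simp [cycleEnd, Fin.ext_iff, he']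
      left
      simp only [hend, he, if_true]
      omega
    · have hend : cycleEnd hc (i, true) = some ⟨i, e⟩ := by simp [cycleEnd, Fin.ext_iff, he']
      right
      simp only [hend, he, if_true]
      omega

end Forward

section Backward

variable {k : ℕ} {c : Fin k → ℕ} {b : ℕ} {w : Fin k × Bool → ℕ}

variable (c b w) in
def pairTime : Option ((i : Fin k) × Fin (c i)) → ℕ
  | none => 0
  | some ⟨i, j⟩ =>
    if c i - w (i, true) ≤ j then b + 1 - w (i, true) + (c i - 1 - j) else b + 1 - w (i, false) + j

variable (c w) in
def pairParent : Option ((i : Fin k) × Fin (c i)) → Option ((i : Fin k) × Fin (c i))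
  | none => none
  | some ⟨i, j⟩ =>
    if c i - w (i, true) ≤ j then
      if h : (j : ℕ) + 1 < c i then some ⟨i, ⟨j + 1, h⟩⟩ else none
    else if (j : ℕ) = 0 then none else some ⟨i, ⟨j - 1, (Nat.sub_le _ _).trans_lt j.isLt⟩⟩

theorem pairTime_le (hw : IsPairCover c b w) (v : Option ((i : Fin k) × Fin (c i))) :
    pairTime c b w v ≤ b := by
  obtain ⟨hwb, -, hwc⟩ := hw
  rcases v with _ | ⟨i, j⟩
  · exact Nat.zero_le b
  have := hwb (i, false); have := hwb (i, true); have := hwc i; have := j.isLt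
  simp only [pairTime]
  split_ifs <;> omega

theorem pairParent_adj_and_lt (hwb : ∀ p, w p ≤ b) {v : Option ((i : Fin k) × Fin (c i))}
    (hv : v ≠ none) :
    (kCycleGraph c).Adj (pairParent c w v) v ∧
      pairTime c b w (pairParent c w v) < pairTime c b w v := by
  rcases v with _ | ⟨i, j⟩
  · exact absurd rfl hv
  have := hwb (i, false); have := hwb (i, true); have := j.isLt
  simp only [pairParent]
  split_ifs with h₁ h₂ h₂ <;> refine ⟨?_, by simp only [pairTime]; split_ifs <;> omega⟩
  · exact kCycleGraph_adj_some_some_iff.mpr (Or.inr rfl)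
  · exact kCycleGraph_adj_none_some.mpr (Or.inr (by omega))
  · exact kCycleGraph_adj_none_some.mpr (Or.inl h₂)
  · exact kCycleGraph_adj_some_some_iff.mpr (Or.inl (by simp; omega))

variable (b) in
theorem pairParent_eq_none (hwc : ∀ i, c i ≤ w (i, false) + w (i, true)) {i : Fin k}
    {j : Fin (c i)} (h : pairParent c w (some ⟨i, j⟩) = none) :
    ∃ t, pairTime c b w (some ⟨i, j⟩) = b + 1 - w (i, t) ∧ w (i, t) ≠ 0 ∧
      (j : ℕ) = if t then c i - 1 else 0 := by
  have := hwc i; have := j.isLt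
  simp only [pairParent] at h
  simp only [pairTime]
  split_ifs at h with h₁ h₂ h₂
  · exact ⟨true, by rw [if_pos h₁]; simp only [if_true]; omega⟩
  · exact ⟨false, by rw [if_neg h₁]; simp only [Bool.false_eq_true, if_false]; omega⟩

theorem pairParent_eq_some {i i₀ : Fin k} {j : Fin (c i)} {j₀ : Fin (c i₀)}
    (h : pairParent c w (some ⟨i, j⟩) = some ⟨i₀, j₀⟩) :
    i = i₀ ∧ ((c i - w (i, true) ≤ j ∧ (j₀ : ℕ) = j + 1) ∨
      ((j : ℕ) < c i - w (i, true) ∧ (j : ℕ) = j₀ + 1)) := by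
  simp only [pairParent] at h
  split_ifs at h with h₁ h₂ h₂ <;> obtain ⟨rfl, h⟩ := Sigma.mk.inj_iff.mp (Option.some.inj h) <;>
    have h := congrArg Fin.val (eq_of_heq h) <;> simp at h <;> omega

theorem pairTime_injOn_centerChildren (hw : IsPairCover c b w) :
    Set.InjOn (pairTime c b w) {v | v ≠ none ∧ pairParent c w v = none} := by
  obtain ⟨hwb, hinj, hwc⟩ := hw
  rintro (_ | ⟨i, j⟩) ⟨hv, hpv⟩ (_ | ⟨i', j'⟩) ⟨hv', hpv'⟩ hτ
  · exact absurd rfl hv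
  · exact absurd rfl hv
  · exact absurd rfl hv'
  obtain ⟨t, ht, ht0, hj⟩ := pairParent_eq_none b hwc hpv
  obtain ⟨t', ht', ht0', hj'⟩ := pairParent_eq_none b hwc hpv'
  have := hwb (i, t); have := hwb (i', t')
  have hwt : w (i, t) = w (i', t') := by omega
  obtain ⟨rfl, rfl⟩ := Prod.mk.inj (hinj ht0 ht0' hwt)
  rw [Fin.ext (hj.trans hj'.symm)]

theorem pairParent_children_subsingleton (u : (i : Fin k) × Fin (c i)) :
    Set.Subsingleton {v | v ≠ none ∧ pairParent c w v = some u} := by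
  rintro (_ | ⟨i, j⟩) ⟨hv, hpv⟩ (_ | ⟨i', j'⟩) ⟨hv', hpv'⟩
  · rfl
  · exact absurd rfl hv
  · exact absurd rfl hv'
  obtain ⟨rfl, h⟩ := pairParent_eq_some hpv
  obtain ⟨rfl, h'⟩ := pairParent_eq_some hpv'
  rw [Fin.ext (show (j : ℕ) = j' by omega)]

theorem isBroadcastScheme_pairTime (hw : IsPairCover c b w) :
    IsBroadcastScheme (kCycleGraph c) none (pairTime c b w) (pairParent c w) := by
  refine ⟨rfl, fun v hv => pairParent_adj_and_lt hw.1 hv, ?_⟩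
  rintro (_ | u)
  · exact pairTime_injOn_centerChildren hw
  · exact (pairParent_children_subsingleton u).injOn _

end Backward

theorem kCycle_broadcast_within_iff_covers {k : ℕ} {c : Fin k → ℕ} (hc : ∀ i, 2 ≤ c i) (b : ℕ) :
    (∃ (τ : Option ((i : Fin k) × Fin (c i)) → ℕ)
        (par : Option ((i : Fin k) × Fin (c i)) → Option ((i : Fin k) × Fin (c i))),
        IsBroadcastScheme (kCycleGraph c) none τ par ∧ ∀ v, τ v ≤ b) ↔
      Covers (Icc 1 b).val (univ.val.map c) := by
  rw [covers_Icc_iff_exists_isPairCover]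
  constructor
  · rintro ⟨τ, par, hs, hb⟩
    exact ⟨_, isPairCover_of_isBroadcastScheme hc hs hb⟩
  · rintro ⟨w, hw⟩
    exact ⟨pairTime c b w, pairParent c w, isBroadcastScheme_pairTime hw, pairTime_le hw⟩

theorem kCycle_broadcast_iff_covers_general (k : ℕ) (c : Fin k → ℕ)
    (hc3 : ∀ i, 3 ≤ c i) :
    (∀ b : ℕ, 0 < b →
      ((∃ (τ : Option ((i : Fin k) × Fin (c i)) → ℕ)
          (par : Option ((i : Fin k) × Fin (c i)) → Option ((i : Fin k) × Fin (c i))),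
          IsBroadcastScheme (kCycleGraph c) none τ par ∧ ∀ v, τ v ≤ b) ↔
        Covers (Finset.Icc 1 b).val (Finset.univ.val.map c))) ∧
    sInf {b : ℕ | ∃ (τ : Option ((i : Fin k) × Fin (c i)) → ℕ)
          (par : Option ((i : Fin k) × Fin (c i)) → Option ((i : Fin k) × Fin (c i))),
          IsBroadcastScheme (kCycleGraph c) none τ par ∧ ∀ v, τ v ≤ b}
      = prefixOPT (Finset.univ.val.map c) := by
  have key := kCycle_broadcast_within_iff_covers fun i => (hc3 i).trans' (by norm_num)
  exact ⟨fun b _ => key b, congrArg sInf (Set.ext key)⟩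

/-- Broadcasting in the `k`-cycle graph from the center within `b`
rounds is equivalent to `[b]` covering the multiset `{c₁, …, c_k}`; consequently the
minimum broadcast time equals the Prefix Covering optimum. -/
theorem kCycle_broadcast_iff_covers (k : ℕ) (hk : 1 ≤ k) (c : Fin k → ℕ)
    (hc3 : ∀ i, 3 ≤ c i) :
    (∀ b : ℕ, 0 < b →
      ((∃ (τ : Option ((i : Fin k) × Fin (c i)) → ℕ)
          (par : Option ((i : Fin k) × Fin (c i)) → Option ((i : Fin k) × Fin (c i))),
          IsBroadcastScheme (kCycleGraph c) none τ par ∧ ∀ v, τ v ≤ b) ↔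
        Covers (Finset.Icc 1 b).val (Finset.univ.val.map c))) ∧
    sInf {b : ℕ | ∃ (τ : Option ((i : Fin k) × Fin (c i)) → ℕ)
          (par : Option ((i : Fin k) × Fin (c i)) → Option ((i : Fin k) × Fin (c i))),
          IsBroadcastScheme (kCycleGraph c) none τ par ∧ ∀ v, τ v ≤ b}
      = prefixOPT (Finset.univ.val.map c) :=
  kCycle_broadcast_iff_covers_general k c hc3
end

section
/- Let m ≥ 1 and let c_1,…,c_m be odd integers with c_i ≥ 3 for all i and Σ_{i=1}^m c_i = m(2m+1). Then the set [2m] = {1,2,…,2m} covers the multiset {c_1,…,c_m} if and only if there exist a bijection α from {1,…,m} onto the even numbers {2,4,…,2m} and a bijection β from {1,…,m} onto the odd numbers {1,3,…,2m−1} such that α(i)+β(i) = c_i for all i ∈ {1,…,m}. -/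
open Finset

theorem Multiset.exists_lift_of_map_eq {α β γ : Type*} [DecidableEq α] [Inhabited β]
    {f : β → γ} {g : α → γ} (s : Finset α) {T : Multiset β} (hT : T.map f = s.val.map g) :
    ∃ h : α → β, (∀ a ∈ s, f (h a) = g a) ∧ s.val.map h = T := by
  induction s using Finset.cons_induction generalizing T with
  | empty => exact ⟨default, by simp, by simp [(by simpa using hT : T = 0)]⟩
  | cons a s ha ih =>
    have hga : g a ∈ T.map f := by simp [hT]
    obtain ⟨q, hq, hfq⟩ := Multiset.mem_map.1 hga
    obtain ⟨T, rfl⟩ := Multiset.exists_cons_of_mem hq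
    rw [cons_val, Multiset.map_cons, Multiset.map_cons, hfq, Multiset.cons_inj_right] at hT
    obtain ⟨h, hfh, rfl⟩ := ih hT
    have hne : ∀ x ∈ s, x ≠ a := fun x hx hxa => ha (hxa ▸ hx)
    refine ⟨Function.update h a q, ?_, ?_⟩
    · refine (Finset.forall_mem_cons ha _).2
        ⟨by rw [Function.update_self, hfq], fun x hx => ?_⟩
      rw [Function.update_of_ne (hne x hx), hfh x hx]
    · rw [cons_val, Multiset.map_cons, Function.update_self]
      exact congrArg _ (Multiset.map_congr rfl fun x hx => Function.update_of_ne (hne x hx) _ _)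

theorem covers_map_iff {ι : Type*} [Fintype ι] (C : Multiset ℕ) (c : ι → ℕ) :
    Covers C (univ.val.map c) ↔
      ∃ P : ι → Multiset ℕ,
        ∑ i, P i ≤ C ∧ ∀ i, Multiset.card (P i) ≤ 2 ∧ c i ≤ (P i).sum := by
  classical
  constructor
  · rintro ⟨T, hfst, hle, hT⟩
    obtain ⟨h, hfh, rfl⟩ := Multiset.exists_lift_of_map_eq univ hfst
    refine ⟨fun i => (h i).2, by simpa [Multiset.map_map] using hle, fun i => ?_⟩
    simpa [hfh i (mem_univ i)] using hT (h i) (Multiset.mem_map_of_mem h (mem_univ i))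
  · rintro ⟨P, hle, hP⟩
    refine ⟨univ.val.map fun i => (c i, P i), by simp [Multiset.map_map], ?_, ?_⟩
    · simpa [Multiset.map_map] using hle
    · simpa using hP

theorem Multiset.eq_of_le_of_sum_le {s t : Multiset ℕ} (hst : s ≤ t) (hsum : t.sum ≤ s.sum)
    (h0 : 0 ∉ t) : s = t := by
  obtain ⟨u, rfl⟩ := Multiset.le_iff_exists_add.1 hst
  have hu : u.sum = 0 := by simp only [Multiset.sum_add] at hsum; omega
  have : u = 0 := Multiset.eq_zero_of_forall_notMem fun x hx =>
    h0 (by simpa [(Multiset.sum_eq_zero_iff.1 hu) x hx] using Multiset.mem_add.2 (Or.inr hx))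
  simp [this]

theorem sum_eq_and_sum_eq_of_sum_le {ι : Type*} [Fintype ι] {P : ι → Multiset ℕ}
    {C : Multiset ℕ} {c : ι → ℕ} (hP : ∑ i, P i ≤ C) (hc : ∀ i, c i ≤ (P i).sum)
    (hC : C.sum ≤ ∑ i, c i) (h0 : 0 ∉ C) : ∑ i, P i = C ∧ ∀ i, (P i).sum = c i := by
  have hsum_sum : (∑ i, P i).sum = ∑ i, (P i).sum := map_sum Multiset.sumAddMonoidHom P univ
  have hcP : ∑ i, c i ≤ ∑ i, (P i).sum := sum_le_sum fun i _ => hc i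
  have hPC : ∑ i, P i = C := Multiset.eq_of_le_of_sum_le hP (by omega) h0
  refine ⟨hPC, fun i => ((sum_eq_sum_iff_of_le fun i _ => hc i).1 ?_ i (mem_univ i)).symm⟩
  exact le_antisymm hcP (by rw [← hsum_sum, hPC]; exact hC)

theorem Multiset.card_eq_of_card_le_of_le_card_sum {ι α : Type*} [Fintype ι]
    {P : ι → Multiset α} {k : ℕ} (hP : ∀ i, Multiset.card (P i) ≤ k)
    (hcard : k * Fintype.card ι ≤ Multiset.card (∑ i, P i)) (i : ι) :
    Multiset.card (P i) = k := by
  refine (sum_eq_sum_iff_of_le fun i _ => hP i).1 (le_antisymm (sum_le_sum fun i _ => hP i) ?_)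
    i (mem_univ i)
  simpa [mul_comm] using hcard

theorem exists_even_odd_of_card_eq_two {s : Multiset ℕ} (hs : Multiset.card s = 2)
    (hodd : Odd s.sum) : ∃ a b, s = {a, b} ∧ Even a ∧ Odd b := by
  obtain ⟨a, b, rfl⟩ := Multiset.card_eq_two.1 hs
  simp only [Multiset.insert_eq_cons, Multiset.sum_cons, Multiset.sum_singleton] at hodd
  rcases Nat.even_or_odd a with ha | ha
  · exact ⟨a, b, rfl, ha, (Nat.odd_add'.1 hodd).2 ha⟩
  · exact ⟨b, a, Multiset.pair_comm a b, (Nat.odd_add.1 hodd).1 ha, ha⟩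

theorem sum_pair_eq_map_add_map {ι α : Type*} [Fintype ι] (f g : ι → α) :
    ∑ i, ({f i, g i} : Multiset α) = univ.val.map f + univ.val.map g := by
  have hsingle (h : ι → α) : ∑ i, ({h i} : Multiset α) = univ.val.map h := by
    rw [sum_eq_multiset_sum, ← Multiset.sum_map_singleton (univ.val.map h), Multiset.map_map]
    rfl
  simp only [Multiset.insert_eq_cons, ← Multiset.singleton_add, sum_add_distrib, hsingle]

theorem Multiset.eq_filter_of_add_eq {α : Type*} {p : α → Prop} [DecidablePred p]
    {s t u : Multiset α} (h : s + t = u) (hs : ∀ x ∈ s, p x) (ht : ∀ x ∈ t, ¬p x) :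
    s = u.filter p := by
  rw [← h, Multiset.filter_add, Multiset.filter_eq_self.2 hs, Multiset.filter_eq_nil.2 ht,
    add_zero]

theorem Set.bijOn_univ_iff_map_univ_eq {ι α : Type*} [Fintype ι] [DecidableEq α] (f : ι → α)
    (s : Finset α) : Set.BijOn f Set.univ s ↔ Finset.univ.val.map f = s.val := by
  constructor
  · intro hf
    rw [← image_val_of_injOn (hf.injOn.mono (Set.subset_univ _))]
    congr 1
    exact coe_injective (by simpa using hf.image_eq)
  · intro hf
    refine ⟨fun i _ => ?_, fun i _ j _ hij => ?_, fun x hx => ?_⟩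
    · rw [Finset.mem_coe, ← Finset.mem_val, ← hf]
      exact Multiset.mem_map_of_mem f (Finset.mem_univ i)
    · exact Multiset.inj_on_of_nodup_map (hf ▸ s.nodup) i (Finset.mem_univ i) j
        (Finset.mem_univ j) hij
    · rw [Finset.mem_coe, ← Finset.mem_val, ← hf] at hx
      obtain ⟨i, -, rfl⟩ := Multiset.mem_map.1 hx
      exact Set.mem_image_of_mem f (Set.mem_univ i)

theorem Finset.sum_Icc_one_id_mul_two (n : ℕ) : (∑ i ∈ Icc 1 n, i) * 2 = n * (n + 1) := by
  induction n with
  | zero => simp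
  | succ n ih => rw [sum_Icc_succ_top (by omega), add_mul, ih]; ring

theorem covers_iff_evenOdd_general (m : ℕ) (c : Fin m → ℕ)
    (hodd : ∀ i, Odd (c i))
    (hsum : ∑ i, c i = m * (2 * m + 1)) :
    Covers (Finset.Icc 1 (2 * m)).val (Finset.univ.val.map c) ↔
    (∃ α β : Fin m → ℕ,
        Set.BijOn α Set.univ {x | Even x ∧ x ∈ Set.Icc 1 (2 * m)} ∧
        Set.BijOn β Set.univ {x | Odd x ∧ x ∈ Set.Icc 1 (2 * m)} ∧
        ∀ i, α i + β i = c i) := by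
  set I := Icc 1 (2 * m)
  have hcoe (p : ℕ → Prop) [DecidablePred p] :
      {x | p x ∧ x ∈ Set.Icc 1 (2 * m)} = ↑(I.filter p) := by
    ext; simp [I, and_comm]
  have hIsum : I.val.sum = m * (2 * m + 1) := by
    have := sum_Icc_one_id_mul_two (2 * m)
    rw [sum_eq_multiset_sum, Multiset.map_id'] at this
    linarith
  simp only [hcoe, Set.bijOn_univ_iff_map_univ_eq, covers_map_iff, filter_val]
  constructor
  · rintro ⟨P, hPI, hP⟩
    obtain ⟨hPI, hPsum⟩ :=
      sum_eq_and_sum_eq_of_sum_le hPI (fun i => (hP i).2) (by rw [hIsum, hsum]) (by simp [I])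
    have hcard := Multiset.card_eq_of_card_le_of_le_card_sum (fun i => (hP i).1)
      (by rw [hPI]; simp [I, mul_comm])
    choose α β hPαβ hα hβ using
      fun i => exists_even_odd_of_card_eq_two (hcard i) (hPsum i ▸ hodd i)
    have hαβ : univ.val.map α + univ.val.map β = I.val := by
      rw [← hPI, ← sum_pair_eq_map_add_map]; simp [hPαβ]
    refine ⟨α, β, Multiset.eq_filter_of_add_eq hαβ ?_ ?_,
      Multiset.eq_filter_of_add_eq ((add_comm _ _).trans hαβ) ?_ ?_,
      fun i => by simpa [hPαβ i] using hPsum i⟩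
    all_goals simp [hα, hβ]
  · rintro ⟨α, β, hα, hβ, hc⟩
    refine ⟨fun i => {α i, β i}, le_of_eq ?_, fun i => ⟨by simp, by simp [hc]⟩⟩
    rw [sum_pair_eq_map_add_map, hα, hβ]
    simp_rw [← Nat.not_even_iff_odd]
    exact Multiset.filter_add_not _ _

/-- For odd `cᵢ ≥ 3` summing to `m(2m+1)`, the set `[2m]` covers
the multiset `{c₁, …, c_m}` iff there are bijections `α` onto the even numbers and
`β` onto the odd numbers of `{1, …, 2m}` with `α i + β i = cᵢ` for all `i`. -/
theorem covers_iff_evenOdd (m : ℕ) (hm : 1 ≤ m) (c : Fin m → ℕ)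
    (hodd : ∀ i, Odd (c i)) (hc3 : ∀ i, 3 ≤ c i)
    (hsum : ∑ i, c i = m * (2 * m + 1)) :
    Covers (Finset.Icc 1 (2 * m)).val (Finset.univ.val.map c) ↔
    (∃ α β : Fin m → ℕ,
        Set.BijOn α Set.univ {x | Even x ∧ x ∈ Set.Icc 1 (2 * m)} ∧
        Set.BijOn β Set.univ {x | Odd x ∧ x ∈ Set.Icc 1 (2 * m)} ∧
        ∀ i, α i + β i = c i) :=
  covers_iff_evenOdd_general m c hodd hsum
end

section
/- Let k ≥ 1 and let c_1,…,c_k be integers with c_i ≥ 3, let G be the k-cycle graph G(c_1,…,c_k) with center r, and let the source be s = r. Then in any broadcast scheme for (G,s), for every integer i ≥ 0 the number of vertices v with τ(v) ≤ i is at most 1 + i(i+1)/2. -/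
/-!
A vertex other than the source has at most two neighbours, one of which is its parent, so it
informs at most one vertex: the broadcast tree splits into chains, one hanging off each child `d`
of the source. A vertex `v` informed by round `i` is then determined by the pair `(τ v, τ d)`,
`d` the head of its chain, because the source informs its children in distinct rounds and inform
times strictly increase along a chain. These pairs satisfy `1 ≤ τ d ≤ τ v ≤ i`, and there are
`i (i + 1) / 2` of them.
-/

open Finset Relation

variable {V : Type*} {G : SimpleGraph V} {s : V} {τ : V → ℕ} {par : V → V}

/-- A parent-to-child step of the broadcast tree avoiding the source, which (unlike the other
vertices of a cycle graph) may have many children. -/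
def ChainStep (s : V) (par : V → V) (u v : V) : Prop :=
  u ≠ s ∧ v ≠ s ∧ par v = u

namespace IsBroadcastScheme

theorem eq_or_lt_of_reflTransGen_chainStep (h : IsBroadcastScheme G s τ par) {u v : V}
    (huv : ReflTransGen (ChainStep s par) u v) : u = v ∨ τ u < τ v := by
  induction huv with
  | refl => exact .inl rfl
  | tail _ hbc ih =>
    obtain ⟨-, hc, rfl⟩ := hbc
    have := (h.2.1 _ hc).2
    rcases ih with rfl | ih <;> omega

theorem exists_reflTransGen_chainStep (h : IsBroadcastScheme G s τ par) {v : V} (hv : v ≠ s) :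
    ∃ d, d ≠ s ∧ par d = s ∧ ReflTransGen (ChainStep s par) d v := by
  induction hτ : τ v using Nat.strong_induction_on generalizing v with
  | _ n ih =>
    by_cases hpv : par v = s
    · exact ⟨v, hv, hpv, .refl⟩
    · obtain ⟨d, hd, hpd, hdv⟩ := ih _ (hτ ▸ (h.2.1 v hv).2) hpv rfl
      exact ⟨d, hd, hpd, hdv.tail ⟨hpv, hv, rfl⟩⟩

theorem subsingleton_children_of_degree_le_two [G.LocallyFinite]
    (h : IsBroadcastScheme G s τ par) {u : V} (hu : u ≠ s) (hdeg : G.degree u ≤ 2) :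
    {v | v ≠ s ∧ par v = u}.Subsingleton := by
  classical
  have child_ne_par : ∀ x, x ≠ s → par x = u → x ≠ par u := fun x hx hxu hx' => by
    have := (h.2.1 u hu).2
    have := hxu ▸ (h.2.1 x hx).2
    rw [hx'] at this
    omega
  have child_adj : ∀ x, x ≠ s → par x = u → G.Adj u x := fun x hx hxu => hxu ▸ (h.2.1 x hx).1
  rintro v ⟨hv, hvu⟩ w ⟨hw, hwu⟩
  by_contra hvw
  have hsub : {v, w, par u} ⊆ G.neighborFinset u := by
    intro x hx
    simp only [mem_insert, mem_singleton] at hx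
    rw [SimpleGraph.mem_neighborFinset]
    rcases hx with rfl | rfl | rfl
    · exact child_adj x hv hvu
    · exact child_adj x hw hwu
    · exact (h.2.1 u hu).1.symm
  have := card_le_card hsub
  rw [card_eq_three.mpr ⟨v, w, par u, hvw, child_ne_par v hv hvu, child_ne_par w hw hwu, rfl⟩,
    SimpleGraph.card_neighborFinset_eq_degree] at this
  omega

theorem eq_of_reflTransGen_chainStep_of_tau_eq (h : IsBroadcastScheme G s τ par)
    (hchild : ∀ u ≠ s, {v | v ≠ s ∧ par v = u}.Subsingleton) {d v w : V}
    (hdv : ReflTransGen (ChainStep s par) d v) (hdw : ReflTransGen (ChainStep s par) d w)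
    (hτ : τ v = τ w) : v = w := by
  have hunique : Relator.RightUnique (ChainStep s par) :=
    fun a _ _ ⟨ha, hb, hba⟩ ⟨_, hc, hca⟩ => hchild a ha ⟨hb, hba⟩ ⟨hc, hca⟩
  rcases ReflTransGen.total_of_right_unique hunique hdv hdw with hvw | hwv
  · exact (h.eq_or_lt_of_reflTransGen_chainStep hvw).resolve_right hτ.not_lt
  · exact ((h.eq_or_lt_of_reflTransGen_chainStep hwv).resolve_right hτ.symm.not_lt).symm

theorem card_le_of_subsingleton_children [Fintype V] (h : IsBroadcastScheme G s τ par)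
    (hchild : ∀ u ≠ s, {v | v ≠ s ∧ par v = u}.Subsingleton) (i : ℕ) :
    #{v | τ v ≤ i} ≤ 1 + i * (i + 1) / 2 := by
  classical
  let T : Finset ((_ : ℕ) × ℕ) := (range (i + 1)).sigma fun a => Icc 1 a
  have hT : #T = i * (i + 1) / 2 := by
    simp [T, sum_range_id, mul_comm]
  have hcard : #(({v | τ v ≤ i} : Finset V).erase s) ≤ #T := by
    refine card_le_card_of_forall_subsingleton (fun v (p : (_ : ℕ) × ℕ) => p.1 = τ v ∧
      ∃ d, d ≠ s ∧ par d = s ∧ τ d = p.2 ∧ ReflTransGen (ChainStep s par) d v) ?_ ?_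
    · intro v hv
      obtain ⟨hvs, hvi⟩ : v ≠ s ∧ τ v ≤ i := by simpa using hv
      obtain ⟨d, hd, hpd, hdv⟩ := h.exists_reflTransGen_chainStep hvs
      refine ⟨⟨τ v, τ d⟩, ?_, rfl, d, hd, hpd, rfl, hdv⟩
      have hd_pos := (h.2.1 d hd).2
      rw [hpd, h.1] at hd_pos
      have := h.eq_or_lt_of_reflTransGen_chainStep hdv
      simp only [T, mem_sigma, mem_range, mem_Icc]
      rcases this with rfl | _ <;> omega
    · rintro ⟨a, b⟩ - v ⟨-, rfl, d, hd, hpd, rfl, hdv⟩ w ⟨-, hτ, d', hd', hpd', hτd, hdw⟩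
      obtain rfl : d = d' := h.2.2 s ⟨hd, hpd⟩ ⟨hd', hpd'⟩ hτd.symm
      exact h.eq_of_reflTransGen_chainStep_of_tau_eq hchild hdv hdw hτ
  have := pred_card_le_card_erase (s := ({v | τ v ≤ i} : Finset V)) (a := s)
  omega

end IsBroadcastScheme

theorem kCycleGraph_adj_some {k : ℕ} {c : Fin k → ℕ} {i : Fin k} {j : Fin (c i)}
    {v : Option ((i : Fin k) × Fin (c i))} (hadj : (kCycleGraph c).Adj (some ⟨i, j⟩) v) :
    v = (if (j : ℕ) = 0 then none else some ⟨i, ⟨j - 1, by omega⟩⟩) ∨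
      v = (if h : (j : ℕ) = c i - 1 then none else some ⟨i, ⟨j + 1, by omega⟩⟩) := by
  rw [kCycleGraph, SimpleGraph.fromRel_adj] at hadj
  rcases v with _ | ⟨i', j'⟩
  · obtain ⟨-, hrel | hj | hj⟩ := hadj
    · exact (hrel : False).elim
    all_goals simp [hj]
  · obtain ⟨-, ⟨rfl, hj⟩ | ⟨rfl, hj⟩⟩ := hadj
    · have : (j : ℕ) ≠ c i - 1 := by omega
      simp [this, Fin.ext_iff, hj]
    · simp [hj, Fin.ext_iff]

theorem kCycleGraph_degree_some_le_two {k : ℕ} (c : Fin k → ℕ)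
    [DecidableRel (kCycleGraph c).Adj] (p : (i : Fin k) × Fin (c i)) :
    (kCycleGraph c).degree (some p) ≤ 2 := by
  obtain ⟨a, b, hadj⟩ : ∃ a b, ∀ v, (kCycleGraph c).Adj (some p) v → v = a ∨ v = b :=
    ⟨_, _, fun _ => kCycleGraph_adj_some⟩
  rw [← SimpleGraph.card_neighborFinset_eq_degree]
  refine (card_le_card fun v hv => ?_).trans (card_le_two (a := a) (b := b))
  simpa using hadj v ((SimpleGraph.mem_neighborFinset ..).1 hv)

theorem kCycle_informed_bound_general (k : ℕ) (c : Fin k → ℕ)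
    (τ : Option ((i : Fin k) × Fin (c i)) → ℕ)
    (par : Option ((i : Fin k) × Fin (c i)) → Option ((i : Fin k) × Fin (c i)))
    (h : IsBroadcastScheme (kCycleGraph c) none τ par) (i : ℕ) :
    (Finset.univ.filter fun v => τ v ≤ i).card ≤ 1 + i * (i + 1) / 2 := by
  classical
  refine h.card_le_of_subsingleton_children (fun u hu => ?_) i
  obtain ⟨p, rfl⟩ := Option.ne_none_iff_exists'.mp hu
  exact h.subsingleton_children_of_degree_le_two hu (kCycleGraph_degree_some_le_two c p)

/-- In any broadcast scheme for the `k`-cycle graph with the center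
as source, at most `1 + i(i+1)/2` vertices are informed by round `i`. -/
theorem kCycle_informed_bound (k : ℕ) (hk : 1 ≤ k) (c : Fin k → ℕ)
    (hc3 : ∀ i, 3 ≤ c i)
    (τ : Option ((i : Fin k) × Fin (c i)) → ℕ)
    (par : Option ((i : Fin k) × Fin (c i)) → Option ((i : Fin k) × Fin (c i)))
    (h : IsBroadcastScheme (kCycleGraph c) none τ par) (i : ℕ) :
    (Finset.univ.filter fun v => τ v ≤ i).card ≤ 1 + i * (i + 1) / 2 :=
  kCycle_informed_bound_general k c τ par h i
end

section
/- Let k ≥ 1 and let ℓ_1,…,ℓ_k be positive integers, and let G be the graph H⁺(ℓ_1,…,ℓ_k), i.e., the k-path graph with endpoints s,t together with the additional edge {s,t}, with source s. Then in any broadcast scheme for (G,s), for every integer i ≥ 1 the number of vertices v with τ(v) ≤ i is at most i(i−1) + 2. -/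
def kPathRel {k : ℕ} (ℓ : Fin k → ℕ) :
    Bool ⊕ ((i : Fin k) × Fin (ℓ i)) → Bool ⊕ ((i : Fin k) × Fin (ℓ i)) → Prop
  | Sum.inl false, Sum.inr ⟨_, j⟩ => (j : ℕ) = 0
  | Sum.inr ⟨i, j⟩, Sum.inl true => (j : ℕ) = ℓ i - 1
  | Sum.inr ⟨i, j⟩, Sum.inr ⟨i', j'⟩ => i = i' ∧ (j' : ℕ) = (j : ℕ) + 1
  | _, _ => False

/-- The `k`-path graph `H(ℓ₁, …, ℓ_k)`: `k` internally disjoint paths, the `i`-th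
with `ℓ i` internal vertices, joining `s = Sum.inl false` and `t = Sum.inl true`
(vertex `⟨i, j⟩` encodes the `(j+1)`-st internal vertex of the `i`-th path). -/
def kPathGraph {k : ℕ} (ℓ : Fin k → ℕ) :
    SimpleGraph (Bool ⊕ ((i : Fin k) × Fin (ℓ i))) :=
  SimpleGraph.fromRel (kPathRel ℓ)

/-- `H⁺(ℓ₁, …, ℓ_k)`: the `k`-path graph together with the extra edge `{s, t}`. -/
def kPathGraphPlus {k : ℕ} (ℓ : Fin k → ℕ) :
    SimpleGraph (Bool ⊕ ((i : Fin k) × Fin (ℓ i))) :=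
  SimpleGraph.fromRel (fun u v =>
    kPathRel ℓ u v ∨ (u = Sum.inl false ∧ v = Sum.inl true))

/-!
Every vertex other than `s` and `t` has degree 2, so it informs at most one vertex. Counting
parents, the number `N r` of vertices informed by round `r` satisfies
`N (r + 1) ≤ N r + 1 + #{children of s or t informed by round r} ≤ N r + 1 + r + (r - τ t)`,
and since `τ t ≥ 1` induction on `i` gives `N i ≤ i (i - 1) + 2`.
-/

namespace IsBroadcastScheme

variable {V : Type*} {G : SimpleGraph V} {s : V} {τ : V → ℕ} {par : V → V}

theorem adj_par (h : IsBroadcastScheme G s τ par) {v : V} (hv : v ≠ s) : G.Adj (par v) v :=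
  (h.2.1 v hv).1

theorem time_par_lt (h : IsBroadcastScheme G s τ par) {v : V} (hv : v ≠ s) :
    τ (par v) < τ v :=
  (h.2.1 v hv).2

theorem eq_of_par_eq_of_time_eq (h : IsBroadcastScheme G s τ par) {v w : V} (hv : v ≠ s)
    (hw : w ≠ s) (hpar : par v = par w) (hτ : τ v = τ w) : v = w :=
  h.2.2 (par w) ⟨hv, hpar⟩ ⟨hw, rfl⟩ hτ

theorem eq_source_of_time_eq_zero (h : IsBroadcastScheme G s τ par) {v : V} (hv : τ v = 0) :
    v = s := by
  by_contra hvs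
  have := h.time_par_lt hvs
  omega

/-- A non-source vertex with at most two neighbours informs at most one vertex, since one of
the two is its own parent. -/
theorem eq_of_par_eq_of_neighborSet_subset (h : IsBroadcastScheme G s τ par) {u a b : V}
    (hu : u ≠ s) (hab : G.neighborSet u ⊆ {a, b}) {v w : V} (hv : v ≠ s) (hw : w ≠ s)
    (hvu : par v = u) (hwu : par w = u) : v = w := by
  have hne : ∀ x, x ≠ s → par x = u → x ≠ par u := by
    rintro x hx rfl hxu
    have h₁ := h.time_par_lt hx
    have h₂ := h.time_par_lt hu
    rw [← hxu] at h₂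
    omega
  have hmem : ∀ x, x ≠ s → par x = u → x = a ∨ x = b := fun x hx hxu =>
    hab (by rw [SimpleGraph.mem_neighborSet, ← hxu]; exact h.adj_par hx)
  have hpu : par u = a ∨ par u = b := hab (h.adj_par hu).symm
  have := hne v hv hvu
  have := hne w hw hwu
  rcases hmem v hv hvu with rfl | rfl <;> rcases hmem w hw hwu with rfl | rfl <;> tauto

variable [Fintype V]

theorem card_informed_zero_le (h : IsBroadcastScheme G s τ par) :
    (Finset.univ.filter fun v => τ v ≤ 0).card ≤ 1 :=
  Finset.card_le_one.2 fun v hv w hw => by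
    simp only [Finset.mem_filter, Finset.mem_univ, true_and, nonpos_iff_eq_zero] at hv hw
    rw [h.eq_source_of_time_eq_zero hv, h.eq_source_of_time_eq_zero hw]

variable [DecidableEq V]

theorem card_children_le (h : IsBroadcastScheme G s τ par) (u : V) (r : ℕ) :
    (Finset.univ.filter fun v => v ≠ s ∧ par v = u ∧ τ v ≤ r).card ≤ r - τ u := by
  rw [← Nat.card_Ioc]
  refine Finset.card_le_card_of_injOn τ (fun v hv => ?_) fun v hv w hw => ?_
  · simp only [Finset.coe_filter, Finset.mem_univ, true_and, Set.mem_ofPred_eq] at hv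
    obtain ⟨hvs, rfl, hvr⟩ := hv
    exact Finset.mem_Ioc.2 ⟨h.time_par_lt hvs, hvr⟩
  · simp only [Finset.coe_filter, Finset.mem_univ, true_and, Set.mem_ofPred_eq] at hv hw
    exact h.eq_of_par_eq_of_time_eq hv.1 hw.1 (hv.2.1.trans hw.2.1.symm)

/-- If only the vertices of `B` may inform more than one vertex, then the vertices newly informed
in round `r + 1`, together with those informed by round `r` through a parent outside `B`, have
pairwise distinct parents, all informed by round `r`. -/
theorem card_informed_succ_le (h : IsBroadcastScheme G s τ par) (B : Finset V)
    (hB : Set.InjOn par {v | v ≠ s ∧ par v ∉ B}) (r : ℕ) :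
    (Finset.univ.filter fun v => τ v ≤ r + 1).card ≤
      (Finset.univ.filter fun v => τ v ≤ r).card + 1 + ∑ u ∈ B, (r - τ u) := by
  set R := Finset.univ.filter fun v => v ≠ s ∧ τ v ≤ r + 1 ∧ (τ v = r + 1 ∨ par v ∉ B)
  set Q := Finset.univ.filter fun v => v ≠ s ∧ τ v ≤ r ∧ par v ∈ B
  have hcover : (Finset.univ.filter fun v => τ v ≤ r + 1) ⊆ insert s (Q ∪ R) := by
    intro v hv
    simp only [R, Q, Finset.mem_filter, Finset.mem_univ, true_and, Finset.mem_insert,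
      Finset.mem_union] at hv ⊢
    grind
  have hR : R.card ≤ (Finset.univ.filter fun v => τ v ≤ r).card := by
    refine Finset.card_le_card_of_injOn par (fun v hv => ?_) fun v hv w hw hvw => ?_
    · simp only [R, Finset.coe_filter, Finset.mem_univ, true_and, Set.mem_ofPred_eq] at hv
      have := h.time_par_lt hv.1
      simp only [Finset.coe_filter, Finset.mem_univ, true_and, Set.mem_ofPred_eq]
      omega
    · simp only [R, Finset.coe_filter, Finset.mem_univ, true_and, Set.mem_ofPred_eq] at hv hw
      by_cases hvB : par v ∈ B
      · have hv' := hv.2.2.resolve_right (not_not.2 hvB)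
        have hw' := hw.2.2.resolve_right (hvw ▸ not_not.2 hvB)
        exact h.eq_of_par_eq_of_time_eq hv.1 hw.1 hvw (hv'.trans hw'.symm)
      · exact hB ⟨hv.1, hvB⟩ ⟨hw.1, hvw ▸ hvB⟩ hvw
  have hQ : Q.card ≤ ∑ u ∈ B, (r - τ u) := by
    rw [Finset.card_eq_sum_card_fiberwise fun v hv => (Finset.mem_filter.1 hv).2.2.2]
    refine Finset.sum_le_sum fun u _ => le_trans (Finset.card_le_card fun v hv => ?_)
      (h.card_children_le u r)
    simp only [Q, Finset.mem_filter, Finset.mem_univ, true_and] at hv ⊢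
    exact ⟨hv.1.1, hv.2, hv.1.2.1⟩
  calc (Finset.univ.filter fun v => τ v ≤ r + 1).card
      ≤ (insert s (Q ∪ R)).card := Finset.card_le_card hcover
    _ ≤ Q.card + R.card + 1 :=
      (Finset.card_insert_le _ _).trans (Nat.add_le_add_right (Finset.card_union_le _ _) 1)
    _ ≤ _ := by omega

end IsBroadcastScheme

theorem le_mul_pred_add_two_of_le_succ {f : ℕ → ℕ} (h₀ : f 0 ≤ 1)
    (hf : ∀ r, f (r + 1) ≤ f r + 1 + r + (r - 1)) : ∀ i, f i ≤ i * (i - 1) + 2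
  | 0 => by omega
  | 1 => by have := hf 0; simp only [zero_add] at this; omega
  | r + 2 => by
    have h₁ := hf (r + 1)
    have h₂ := le_mul_pred_add_two_of_le_succ h₀ hf (r + 1)
    simp only [Nat.add_sub_cancel] at h₁ h₂
    show f (r + 2) ≤ (r + 2) * (r + 1) + 2
    nlinarith

theorem kPathGraphPlus_neighborSet_inr_subset {k : ℕ} (ℓ : Fin k → ℕ)
    (p : (i : Fin k) × Fin (ℓ i)) :
    ∃ a b, (kPathGraphPlus ℓ).neighborSet (Sum.inr p) ⊆ {a, b} := by
  obtain ⟨i, j⟩ := p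
  refine ⟨if hj : (j : ℕ) = 0 then Sum.inl false else Sum.inr ⟨i, ⟨j - 1, by omega⟩⟩,
    if hj : (j : ℕ) + 1 < ℓ i then Sum.inr ⟨i, ⟨j + 1, hj⟩⟩ else Sum.inl true, ?_⟩
  rintro ((_ | _) | ⟨i', j'⟩) hx <;>
    simp [kPathGraphPlus, kPathRel, SimpleGraph.fromRel_adj] at hx ⊢
  · exact Or.inl hx
  · exact Or.inr (by have := j.isLt; omega)
  · rcases hx.2 with ⟨rfl, hj'⟩ | ⟨rfl, hj'⟩
    · have hlt : (j : ℕ) + 1 < ℓ i := hj' ▸ j'.isLt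
      simp [hlt, Fin.ext_iff, hj']
    · simp [hj']

theorem kPathPlus_informed_bound_general (k : ℕ) (ℓ : Fin k → ℕ)
    (τ : Bool ⊕ ((i : Fin k) × Fin (ℓ i)) → ℕ)
    (par : Bool ⊕ ((i : Fin k) × Fin (ℓ i)) → Bool ⊕ ((i : Fin k) × Fin (ℓ i)))
    (h : IsBroadcastScheme (kPathGraphPlus ℓ) (Sum.inl false) τ par)
    (i : ℕ) :
    (Finset.univ.filter fun v => τ v ≤ i).card ≤ i * (i - 1) + 2 := by
  have hB : Set.InjOn par {v | v ≠ Sum.inl false ∧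
      par v ∉ ({Sum.inl false, Sum.inl true} : Finset (Bool ⊕ _))} := by
    rintro v ⟨hv, hvB⟩ w ⟨hw, -⟩ hvw
    rcases hpv : par v with (_ | _) | p
    · simp [hpv] at hvB
    · simp [hpv] at hvB
    obtain ⟨a, b, hab⟩ := kPathGraphPlus_neighborSet_inr_subset ℓ p
    exact h.eq_of_par_eq_of_neighborSet_subset Sum.inr_ne_inl hab hv hw hpv (hvw ▸ hpv)
  have ht : 1 ≤ τ (Sum.inl true) := Nat.one_le_of_lt (h.time_par_lt (by simp))
  refine le_mul_pred_add_two_of_le_succ (f := fun r => (Finset.univ.filter fun v => τ v ≤ r).card)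
    h.card_informed_zero_le (fun r => ?_) i
  have := h.card_informed_succ_le _ hB r
  rw [Finset.sum_pair (by simp), h.1] at this
  omega

/-- In any broadcast scheme for `H⁺(ℓ₁, …, ℓ_k)` with source `s`,
for every `i ≥ 1` at most `i(i−1) + 2` vertices are informed by round `i`. -/
theorem kPathPlus_informed_bound (k : ℕ) (hk : 1 ≤ k) (ℓ : Fin k → ℕ)
    (hl : ∀ i, 1 ≤ ℓ i)
    (τ : Bool ⊕ ((i : Fin k) × Fin (ℓ i)) → ℕ)
    (par : Bool ⊕ ((i : Fin k) × Fin (ℓ i)) → Bool ⊕ ((i : Fin k) × Fin (ℓ i)))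
    (h : IsBroadcastScheme (kPathGraphPlus ℓ) (Sum.inl false) τ par)
    (i : ℕ) (hi : 1 ≤ i) :
    (Finset.univ.filter fun v => τ v ≤ i).card ≤ i * (i - 1) + 2 :=
  kPathPlus_informed_bound_general k ℓ τ par h i
end

section
/- Let S be a multiset of n positive integers and let p be a positive integer. Then the Prefix Covering optimum satisfies OPT(R_p(S)) ≤ OPT(S) + 2⌈n/p⌉, where R_p(S) is the rounded set of S with p parts. -/
/-- The rounded set `R_p(S)`: list `S` in non-increasing order, cut the list into
consecutive blocks of size `⌈|S|/p⌉` (the last block possibly smaller), and replace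
every element by the maximum element of its block. -/
def roundedSet (p : ℕ) (S : Multiset ℕ) : Multiset ℕ :=
  let l := S.sort (· ≥ ·)
  let b := (S.card + p - 1) / p
  ((List.range l.length).map fun idx => l.getD (idx / b * b) 0 : List ℕ)

/-! Let `b = ⌈n/p⌉` and `m = OPT(S)`. The first block of `R_p(S)` consists of `b` copies of
`max S ≤ 2m`, and the element in sorted position `i ≥ b` is rounded up to the element in
position `⌊i/b⌋ b > i - b`, so it is at most the element of `S` in position `i - b`. Hence the
rounded elements outside the first block are dominated one-to-one by a submultiset of `S` and are
covered by `[m]`, while each copy of `max S` is covered by a fresh pair `{m + 2k + 1, m + 2k + 2}`,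
which uses `2b` new numbers. -/

theorem Multiset.exists_le_map_eq {α β : Type*} {f : α → β} {s : Multiset β} {t : Multiset α}
    (h : s ≤ t.map f) : ∃ u ≤ t, u.map f = s := by
  induction s, t using Quotient.inductionOn₂ with
  | h ls lt =>
  obtain ⟨l, hperm, hsub⟩ := Multiset.coe_le.1 (by simpa using h)
  obtain ⟨l', hl', rfl⟩ := List.sublist_map_iff.1 hsub
  exact ⟨l', Multiset.coe_le.2 hl'.subperm, by simpa using Multiset.coe_eq_coe.2 hperm⟩

theorem Multiset.Rel.exists_map_fst_map_snd {α β : Type*} {r : α → β → Prop} {s : Multiset α}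
    {t : Multiset β} (h : Multiset.Rel r s t) :
    ∃ u : Multiset (α × β), u.map Prod.fst = s ∧ u.map Prod.snd = t ∧ ∀ x ∈ u, r x.1 x.2 := by
  induction h with
  | zero => exact ⟨0, rfl, rfl, by simp⟩
  | @cons a b s t hab _ ih =>
    obtain ⟨u, hu₁, hu₂, hu⟩ := ih
    refine ⟨(a, b) ::ₘ u, by simp [hu₁], by simp [hu₂], ?_⟩
    simpa [hab] using hu

theorem List.map_getD_range_length {α : Type*} (l : List α) (d : α) :
    (List.range l.length).map (l.getD · d) = l :=
  List.ext_getElem (by simp) fun i _ hi => by simp [List.getElem?_eq_getElem hi]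

theorem List.Pairwise.getD_le_getD {l : List ℕ} (hl : l.Pairwise (· ≥ ·)) {i j : ℕ} (hij : i ≤ j) :
    l.getD j 0 ≤ l.getD i 0 := by
  rcases lt_or_ge j l.length with hj | hj
  · rw [List.getD_eq_getElem _ _ hj, List.getD_eq_getElem _ _ (hij.trans_lt hj)]
    simpa using hl.rel_get_of_le (a := ⟨i, hij.trans_lt hj⟩) (b := ⟨j, hj⟩) hij
  · rw [List.getD_eq_default _ _ hj]
    exact Nat.zero_le _

theorem Finset.Icc_val_eq_add (a b c : ℕ) (h₁ : a ≤ b + 1) (h₂ : b ≤ c) :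
    (Finset.Icc a c).val = (Finset.Icc a b).val + (Finset.Icc (b + 1) c).val := by
  have h := List.range'_append_1 (s := a) (m := b + 1 - a) (n := c - b)
  rw [show a + (b + 1 - a) = b + 1 by omega, show b + 1 - a + (c - b) = c + 1 - a by omega] at h
  simp only [Nat.Icc_eq_range', Multiset.coe_add, h, Nat.add_sub_add_right]

namespace Covers

variable {C C₁ C₂ S S₁ S₂ S' : Multiset ℕ}

theorem zero_right (C : Multiset ℕ) : Covers C 0 :=
  ⟨0, rfl, Multiset.zero_le _, by simp⟩

theorem singleton {D : Multiset ℕ} {x : ℕ} (hD : D ≤ C) (hcard : D.card ≤ 2) (hx : x ≤ D.sum) :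
    Covers C {x} :=
  ⟨{(x, D)}, rfl, by simpa using hD, by simpa using ⟨hcard, hx⟩⟩

theorem add (h₁ : Covers C₁ S₁) (h₂ : Covers C₂ S₂) : Covers (C₁ + C₂) (S₁ + S₂) := by
  obtain ⟨T₁, hfst₁, hsnd₁, hT₁⟩ := h₁
  obtain ⟨T₂, hfst₂, hsnd₂, hT₂⟩ := h₂
  refine ⟨T₁ + T₂, by simp [hfst₁, hfst₂], by simpa using add_le_add hsnd₁ hsnd₂, ?_⟩
  intro q hq
  rcases Multiset.mem_add.1 hq with hq | hq
  exacts [hT₁ q hq, hT₂ q hq]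

theorem of_le (hS : S' ≤ S) (h : Covers C S) : Covers C S' := by
  obtain ⟨T, rfl, hsnd, hT⟩ := h
  obtain ⟨T', hT', rfl⟩ := Multiset.exists_le_map_eq hS
  refine ⟨T', rfl, le_trans ?_ hsnd, fun q hq => hT q (Multiset.mem_of_le hT' hq)⟩
  obtain ⟨T'', rfl⟩ := Multiset.le_iff_exists_add.1 hT'
  simp

theorem of_rel (hS : Multiset.Rel (· ≤ ·) S' S) (h : Covers C S) : Covers C S' := by
  obtain ⟨T, rfl, hsnd, hT⟩ := h
  obtain ⟨u, rfl, rfl, hu⟩ := (Multiset.rel_map_right.1 hS).exists_map_fst_map_snd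
  refine ⟨u.map fun x => (x.1, x.2.2), by simp, by simpa [Function.comp_def] using hsnd, ?_⟩
  simp only [Multiset.mem_map]
  rintro _ ⟨x, hx, rfl⟩
  have hx₂ := hT x.2 (Multiset.mem_map_of_mem _ hx)
  exact ⟨hx₂.1, (hu x hx).trans hx₂.2⟩

theorem le_two_mul {m x : ℕ} (hC : ∀ c ∈ C, c ≤ m) (h : Covers C S) (hx : x ∈ S) :
    x ≤ 2 * m := by
  obtain ⟨T, rfl, hsnd, hT⟩ := h
  obtain ⟨q, hq, rfl⟩ := Multiset.mem_map.1 hx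
  have hq_le : q.2 ≤ C := (Multiset.le_sum_of_mem (Multiset.mem_map_of_mem _ hq)).trans hsnd
  have hq₂ : ∀ c ∈ q.2, c ≤ m := fun c hc => hC c (Multiset.mem_of_le hq_le hc)
  calc q.1 ≤ q.2.sum := (hT q hq).2
    _ ≤ q.2.card * m := by simpa using Multiset.sum_le_card_nsmul q.2 m hq₂
    _ ≤ 2 * m := Nat.mul_le_mul_right m (hT q hq).1

end Covers

theorem exists_covers_Icc (S : Multiset ℕ) : ∃ m, Covers (Finset.Icc 1 m).val S := by
  induction S using Multiset.induction with
  | empty => exact ⟨0, Covers.zero_right _⟩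
  | cons x S ih =>
    obtain ⟨m, hm⟩ := ih
    refine ⟨m + x + 1, ?_⟩
    have hx : Covers (Finset.Icc (m + 1) (m + x + 1)).val {x} :=
      Covers.singleton (D := {m + x + 1}) (by simp) (by simp)
        (by simp only [Multiset.sum_singleton]; omega)
    rw [Finset.Icc_val_eq_add 1 m (m + x + 1) (by omega) (by omega), ← Multiset.singleton_add,
      add_comm _ S]
    exact hm.add hx

theorem covers_Icc_replicate {m L : ℕ} (hL : L ≤ 2 * m + 3) (k : ℕ) :
    Covers (Finset.Icc (m + 1) (m + 2 * k)).val (Multiset.replicate k L) := by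
  induction k with
  | zero => exact Covers.zero_right _
  | succ k ih =>
    have hpair : Covers (Finset.Icc (m + 2 * k + 1) (m + 2 * (k + 1))).val {L} := by
      refine Covers.singleton (D := {m + 2 * k + 1, m + 2 * k + 2}) ?_ (by simp) (by simp; omega)
      rw [Multiset.le_iff_subset (by simp)]
      intro x
      simp only [Multiset.insert_eq_cons, Multiset.mem_cons, Multiset.mem_singleton,
        Finset.mem_val, Finset.mem_Icc]
      omega
    rw [Finset.Icc_val_eq_add (m + 1) (m + 2 * k) _ (by omega) (by omega),
      Multiset.replicate_succ, ← Multiset.singleton_add, add_comm _ (Multiset.replicate k L)]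
    exact ih.add hpair

theorem roundedSet_eq_replicate_add {p : ℕ} (hp : 0 < p) {S : Multiset ℕ} (hS : S ≠ 0) :
    ∃ L ∈ S, ∃ U V, roundedSet p S = Multiset.replicate ((S.card + p - 1) / p) L + U ∧
      Multiset.Rel (· ≤ ·) U V ∧ V ≤ S := by
  set l := S.sort (· ≥ ·)
  set n := S.card
  set b := (n + p - 1) / p
  have hlen : l.length = n := Multiset.length_sort _
  have hn : 0 < n := Multiset.card_pos.2 hS
  have hb : 0 < b := Nat.div_pos (by omega) hp
  have hbn : b ≤ n := Nat.div_le_of_le_mul (Nat.sub_le_iff_le_add.2 (by nlinarith))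
  have hSl : S = (Multiset.range n).map (l.getD · 0) := by
    calc S = l := (Multiset.sort_eq S _).symm
      _ = _ := by
        conv_lhs => rw [← List.map_getD_range_length l 0]
        rw [← Multiset.map_coe, Multiset.coe_range, hlen]
  refine ⟨l.getD 0 0, ?_, (Multiset.range (n - b)).map (fun j => l.getD ((b + j) / b * b) 0),
    (Multiset.range (n - b)).map (l.getD · 0), ?_, ?_, ?_⟩
  · rw [List.getD_eq_getElem _ _ (hlen ▸ hn), ← Multiset.mem_sort (· ≥ ·)]
    exact List.getElem_mem _
  · change (((List.range l.length).map fun i => l.getD (i / b * b) 0 : List ℕ) : Multiset ℕ) = _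
    have hsplit : Multiset.range n = Multiset.range b + (Multiset.range (n - b)).map (b + ·) := by
      rw [← Multiset.range_add, Nat.add_sub_cancel' hbn]
    rw [← Multiset.map_coe, Multiset.coe_range, hlen, hsplit, Multiset.map_add, Multiset.map_map]
    congr 1
    refine Multiset.eq_replicate.2 ⟨Multiset.card_map _ _ |>.trans (Multiset.card_range b), ?_⟩
    simp only [Multiset.mem_map, Multiset.mem_range]
    rintro _ ⟨i, hi, rfl⟩
    rw [Nat.div_eq_of_lt hi, zero_mul]
  · refine Multiset.rel_map.2 (Multiset.rel_refl_of_refl_on fun j _ => ?_)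
    refine (Multiset.pairwise_sort S _).getD_le_getD ?_
    rw [Nat.add_div_left _ hb, Nat.succ_mul]
    exact (Nat.lt_div_mul_add hb).le
  · rw [hSl]
    exact Multiset.map_le_map (Multiset.range_le.2 (Nat.sub_le n b))

theorem prefixOPT_roundedSet_le_general (S : Multiset ℕ)
    (p : ℕ) (hp : 0 < p) :
    prefixOPT (roundedSet p S) ≤ prefixOPT S + 2 * ((S.card + p - 1) / p) := by
  rcases eq_or_ne S 0 with rfl | hS
  · have h₀ : Covers (Finset.Icc 1 0).val (roundedSet p 0) := by
      rw [show roundedSet p 0 = 0 by simp [roundedSet]]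
      exact Covers.zero_right _
    exact (Nat.sInf_le h₀).trans (Nat.zero_le _)
  obtain ⟨L, hLS, U, V, hR, hUV, hVS⟩ := roundedSet_eq_replicate_add hp hS
  have hm : Covers (Finset.Icc 1 (prefixOPT S)).val S := Nat.sInf_mem (exists_covers_Icc S)
  have hL : L ≤ 2 * prefixOPT S + 3 :=
    (hm.le_two_mul (fun c hc => (Finset.mem_Icc.1 hc).2) hLS).trans (Nat.le_add_right _ 3)
  refine Nat.sInf_le ?_
  show Covers _ _
  rw [hR, Finset.Icc_val_eq_add 1 (prefixOPT S) _ (by omega) (by omega), add_comm _ U]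
  exact ((hm.of_le hVS).of_rel hUV).add (covers_Icc_replicate hL _)

/-- `OPT(R_p(S)) ≤ OPT(S) + 2⌈n/p⌉` for the Prefix Covering
optimum, where `n = |S|`. -/
theorem prefixOPT_roundedSet_le (S : Multiset ℕ) (hS : ∀ x ∈ S, 0 < x)
    (p : ℕ) (hp : 0 < p) :
    prefixOPT (roundedSet p S) ≤ prefixOPT S + 2 * ((S.card + p - 1) / p) :=
  prefixOPT_roundedSet_le_general S p hp
end

section
/- Let S be a multiset of positive integers and let m and p be positive integers. If the rounded multiset R_p([m]) covers S, then the set [m + ⌈m/p⌉] covers S. -/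
lemma sort_Icc (m : ℕ) :
    (Finset.Icc 1 m).val.sort (· ≥ ·) = (List.range' 1 m).reverse := by
  apply fun h1 h2 h3 => List.Perm.eq_of_pairwise' (r := (· ≥ · : ℕ → ℕ → Prop)) h2 h3 h1
  · rw [← Multiset.coe_eq_coe]
    rw [Multiset.sort_eq, Nat.Icc_eq_range']
    simp only [Nat.add_sub_cancel]
    exact Multiset.coe_eq_coe.mpr (List.reverse_perm _).symm
  · exact Multiset.pairwise_sort _ _
  · rw [List.reverse_range']
    refine List.Pairwise.map _ (fun a b hab => ?_) List.pairwise_lt_range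
    omega

lemma getD_sort_Icc (m j : ℕ) (hj : j < m) :
    ((Finset.Icc 1 m).val.sort (· ≥ ·)).getD j 0 = m - j := by
  rw [sort_Icc, List.reverse_range']
  rw [List.getD_eq_getElem _ _ (by simpa using hj)]
  simp

lemma exists_T' (T : Multiset (ℕ × Multiset ℕ)) :
    ∀ U' : Multiset ℕ, Multiset.Rel (· ≤ ·) (T.map Prod.snd).sum U' →
    (∀ q ∈ T, (Prod.snd q).card ≤ 2 ∧ Prod.fst q ≤ (Prod.snd q).sum) →
    ∃ T' : Multiset (ℕ × Multiset ℕ),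
      T'.map Prod.fst = T.map Prod.fst ∧ (T'.map Prod.snd).sum = U' ∧
      ∀ q ∈ T', (Prod.snd q).card ≤ 2 ∧ Prod.fst q ≤ (Prod.snd q).sum := by
  induction T using Multiset.induction with
  | empty =>
    intro U' hrel _
    simp only [Multiset.map_zero, Multiset.sum_zero] at hrel
    rw [Multiset.rel_zero_left] at hrel
    exact ⟨0, by simp, by simp [hrel], by simp⟩
  | cons q T ih =>
    intro U' hrel hT
    simp only [Multiset.map_cons, Multiset.sum_cons] at hrel
    obtain ⟨s', rest', hs', hrest', hU'⟩ := Multiset.rel_add_left.mp hrel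
    obtain ⟨T', h1, h2, h3⟩ := ih rest' hrest' (fun q hq => hT q (Multiset.mem_cons_of_mem hq))
    refine ⟨(q.1, s') ::ₘ T', ?_, ?_, ?_⟩
    · simp [h1]
    · simp [h2, hU']
    · intro r hr
      rcases Multiset.mem_cons.mp hr with h | h
      · subst h
        obtain ⟨hc, hs⟩ := hT q (Multiset.mem_cons_self _ _)
        exact ⟨by rw [← Multiset.card_eq_card_of_rel hs']; exact hc,
          le_trans hs (Multiset.sum_le_sum_of_rel_le hs')⟩
      · exact h3 r h

lemma covers_mono (C C' D S : Multiset ℕ) (hCC' : Multiset.Rel (· ≤ ·) C C')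
    (hC'D : C' ≤ D) (h : Covers C S) : Covers D S := by
  obtain ⟨T, hfst, hsum, hq⟩ := h
  obtain ⟨V, hV⟩ := Multiset.le_iff_exists_add.mp hsum
  rw [hV] at hCC'
  obtain ⟨U', V', hU', hV', hC'⟩ := Multiset.rel_add_left.mp hCC'
  obtain ⟨T', h1, h2, h3⟩ := exists_T' T U' hU' hq
  exact ⟨T', by rw [h1, hfst],
    by rw [h2]; exact le_trans (by rw [hC']; exact Multiset.le_add_right _ _) hC'D, h3⟩

/-- If the rounded multiset `R_p([m])` covers `S`, then
`[m + ⌈m/p⌉]` covers `S`. -/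
theorem covers_of_roundedSet_covers (S : Multiset ℕ) (hS : ∀ x ∈ S, 0 < x)
    (m p : ℕ) (hm : 0 < m) (hp : 0 < p)
    (h : Covers (roundedSet p (Finset.Icc 1 m).val) S) :
    Covers (Finset.Icc 1 (m + (m + p - 1) / p)).val S := by
  set b := (m + p - 1) / p with hb
  have hb0 : 0 < b := Nat.one_le_div_iff hp |>.mpr (by omega)
  -- rewrite roundedSet
  have hcard : Multiset.card (Finset.Icc 1 m).val = m := by
    rw [Finset.card_val, Nat.card_Icc]; omega
  have hlen : ((Finset.Icc 1 m).val.sort (· ≥ ·)).length = m := by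
    rw [Multiset.length_sort, hcard]
  have hrs : roundedSet p (Finset.Icc 1 m).val =
      (((List.range m).map fun idx =>
        ((Finset.Icc 1 m).val.sort (· ≥ ·)).getD (idx / b * b) 0 : List ℕ) : Multiset ℕ) := by
    rw [roundedSet, hlen, hcard]
  -- the dominating multiset
  set D : Multiset ℕ := (((List.range m).map fun idx => m + b - idx : List ℕ) : Multiset ℕ)
    with hD
  have hrel : Multiset.Rel (· ≤ ·) (roundedSet p (Finset.Icc 1 m).val) D := by
    rw [hrs, hD, ← Multiset.map_coe, ← Multiset.map_coe]
    rw [Multiset.rel_map]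
    refine Multiset.rel_refl_of_refl_on (fun idx hidx => ?_)
    have hidx' : idx < m := by simpa using hidx
    have hq1 : idx / b * b ≤ idx := Nat.div_mul_le_self _ _
    have hq2 : idx < idx / b * b + b := Nat.lt_div_mul_add hb0
    rw [getD_sort_Icc m _ (by omega)]
    omega
  have hDle : D ≤ (Finset.Icc 1 (m + b)).val := by
    have h1 : ((List.range m).map fun idx => m + b - idx) = (List.range' (1 + b) m).reverse := by
      rw [List.reverse_range']
      exact List.map_congr_left (fun x hx => by omega)
    have h2 : List.range' 1 b ++ List.range' (1 + b) m = List.range' 1 (m + b) := by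
      have := List.range'_append (s := 1) (m := b) (n := m) (step := 1)
      simp only [Nat.one_mul] at this
      rw [this, Nat.add_comm b m]
    rw [hD, h1, Nat.Icc_eq_range', Multiset.coe_eq_coe.mpr (List.reverse_perm _)]
    simp only [Nat.add_sub_cancel]
    rw [← h2]
    exact Multiset.coe_le.mpr (List.sublist_append_right _ _).subperm
  exact covers_mono _ _ _ _ hrel hDle h
end

section
/- Let S be a multiset of n positive integers, let β ≥ 0 be an integer, and let p be a positive integer. Then the Double Prefix Covering optimum satisfies OPT(R_p(S), β) ≤ OPT(S, β) + ⌈n/p⌉, where R_p(S) is the rounded set of S with p parts. -/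
/-!
Let `m = OPT(S, β)`, `b = ⌈n/p⌉`, and sort `S` non-increasingly as `s₀ ≥ s₁ ≥ ⋯`. The rounded
value at a position `i ≥ b` is the first element of its block, which sits at a position in
`(i - b, i]`, so it is at most `s_{i-b}`: past the first block, `R_p(S)` is dominated elementwise
by a sub-multiset of `S` and reuses the cover of `S` by `([m], [m - β])`. The at most `b`
elements of the first block are elements of `S`, hence at most `m + (m - β)`, and are covered by
the fresh values `m + 1, …, m + b` and `m - β + 1, …, m - β + b`.
-/

/-- `(C, D)` double-covers `S`: each element `ℓᵢ` of `S` is assigned a value `c i`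
(either `0` or an element of `C`) and a value `d i` (either `0` or an element of `D`),
each element of `C` (resp. `D`) being used at most as many times as its multiplicity,
such that `c i + d i ≥ ℓᵢ` for all `i`. -/
def DoubleCovers (C D S : Multiset ℕ) : Prop :=
  ∃ T : Multiset (ℕ × ℕ × ℕ),
    T.map (fun x => x.1) = S ∧
    Multiset.filter (fun x => x ≠ 0) (T.map fun x => x.2.1) ≤ C ∧
    Multiset.filter (fun x => x ≠ 0) (T.map fun x => x.2.2) ≤ D ∧
    ∀ x ∈ T, x.1 ≤ x.2.1 + x.2.2

/-- The Double Prefix Covering optimum: the least `m ≥ β` such that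
`([m], [m − β])` double-covers `S`. -/
noncomputable def doubleOPT (S : Multiset ℕ) (β : ℕ) : ℕ :=
  sInf {m | β ≤ m ∧ DoubleCovers (Finset.Icc 1 m).val (Finset.Icc 1 (m - β)).val S}

theorem Multiset.exists_le_map_eq_of_le_map {α β : Type*} (f : α → β) {s : Multiset β} :
    ∀ {t : Multiset α}, s ≤ t.map f → ∃ u ≤ t, u.map f = s := by
  classical
  induction s using Multiset.induction_on with
  | empty => exact fun _ => ⟨0, Multiset.zero_le _, rfl⟩
  | cons b s ih =>
    intro t hst
    obtain ⟨a, ha, rfl⟩ :=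
      Multiset.mem_map.mp (Multiset.mem_of_le hst (Multiset.mem_cons_self _ _))
    rw [← Multiset.cons_erase ha, Multiset.map_cons, Multiset.cons_le_cons_iff] at hst
    obtain ⟨u, hu, rfl⟩ := ih hst
    exact ⟨a ::ₘ u, (Multiset.cons_le_cons a hu).trans_eq (Multiset.cons_erase ha),
      Multiset.map_cons f a u⟩

theorem Multiset.rel_coe_of_forall₂ {α β : Type*} {r : α → β → Prop} {l₁ : List α} {l₂ : List β}
    (h : List.Forall₂ r l₁ l₂) : Multiset.Rel r l₁ l₂ := by
  induction h with
  | nil => exact .zero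
  | cons hab _ ih => exact .cons hab ih

namespace DoubleCovers

variable {C D S : Multiset ℕ}

theorem mono {C' D' : Multiset ℕ} (h : DoubleCovers C D S) (hC : C ≤ C') (hD : D ≤ D') :
    DoubleCovers C' D' S := by
  obtain ⟨T, hT, hTC, hTD, hcov⟩ := h
  exact ⟨T, hT, hTC.trans hC, hTD.trans hD, hcov⟩

theorem add {C' D' S' : Multiset ℕ} (h : DoubleCovers C D S) (h' : DoubleCovers C' D' S') :
    DoubleCovers (C + C') (D + D') (S + S') := by
  obtain ⟨T, hT, hTC, hTD, hcov⟩ := h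
  obtain ⟨T', hT', hTC', hTD', hcov'⟩ := h'
  refine ⟨T + T', by simp [hT, hT'], ?_, ?_, ?_⟩
  · simpa only [Multiset.map_add, Multiset.filter_add] using add_le_add hTC hTC'
  · simpa only [Multiset.map_add, Multiset.filter_add] using add_le_add hTD hTD'
  · simpa only [Multiset.mem_add] using fun x hx => hx.elim (hcov x) (hcov' x)

theorem of_le {S' : Multiset ℕ} (h : DoubleCovers C D S) (hS' : S' ≤ S) :
    DoubleCovers C D S' := by
  obtain ⟨T, rfl, hTC, hTD, hcov⟩ := h
  obtain ⟨U, hUT, rfl⟩ := Multiset.exists_le_map_eq_of_le_map _ hS'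
  refine ⟨U, rfl, ?_, ?_, fun x hx => hcov x (Multiset.mem_of_le hUT hx)⟩
  · exact (Multiset.filter_le_filter _ (Multiset.map_le_map hUT)).trans hTC
  · exact (Multiset.filter_le_filter _ (Multiset.map_le_map hUT)).trans hTD

theorem of_rel {S' : Multiset ℕ} (h : DoubleCovers C D S) (hS' : Multiset.Rel (· ≤ ·) S' S) :
    DoubleCovers C D S' := by
  obtain ⟨T, rfl, hTC, hTD, hcov⟩ := h
  obtain ⟨U, hU, rfl, hUle⟩ := (Multiset.rel_map_right.mp hS').exists_map_fst_map_snd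
  refine ⟨U.map fun x => (x.1, x.2.2), by simp [← hU], ?_, ?_, ?_⟩
  · simpa [Function.comp_def] using hTC
  · simpa [Function.comp_def] using hTD
  · simp only [Multiset.mem_map, forall_exists_index, and_imp]
    rintro _ x hx rfl
    exact (hUle x hx).trans (hcov x.2 (Multiset.mem_map_of_mem _ hx))

theorem of_forall_le_add (hC : S.card ≤ C.card) (hD : S.card ≤ D.card)
    (h : ∀ x ∈ S, ∀ c ∈ C, ∀ d ∈ D, x ≤ c + d) : DoubleCovers C D S := by
  set n := S.card
  set lC := C.toList.take n
  set lD := D.toList.take n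
  have take_le (M : Multiset ℕ) : (↑(M.toList.take n) : Multiset ℕ) ≤ M :=
    (Multiset.coe_le.mpr (List.take_sublist _ _).subperm).trans_eq M.coe_toList
  have hlC : lC.length = n := by simp [lC, hC]
  have hlD : lD.length = n := by simp [lD, hD]
  have hS : S.toList.length = (lC.zip lD).length := by simp [hlC, hlD, n]
  have hsnd (f : ℕ × ℕ → ℕ) :
      (S.toList.zip (lC.zip lD)).map (fun x => f x.2) = (lC.zip lD).map f := by
    conv_rhs => rw [← List.map_snd_zip hS.ge, List.map_map]
    rfl
  refine ⟨↑(S.toList.zip (lC.zip lD)), ?_, ?_, ?_, ?_⟩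
  · simp [List.map_fst_zip hS.le]
  · rw [Multiset.map_coe, hsnd Prod.fst, List.map_fst_zip (by omega)]
    exact (Multiset.filter_le _ _).trans (take_le C)
  · rw [Multiset.map_coe, hsnd Prod.snd, List.map_snd_zip (by omega)]
    exact (Multiset.filter_le _ _).trans (take_le D)
  · rintro ⟨x, c, d⟩ hx
    obtain ⟨hx, hcd⟩ := List.of_mem_zip (Multiset.mem_coe.mp hx)
    obtain ⟨hc, hd⟩ := List.of_mem_zip hcd
    exact h x (S.mem_toList.mp hx) c (C.mem_toList.mp (List.mem_of_mem_take hc))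
      d (D.mem_toList.mp (List.mem_of_mem_take hd))

theorem le_add_of_mem {M N : ℕ} (h : DoubleCovers C D S) (hC : ∀ c ∈ C, c ≤ M)
    (hD : ∀ d ∈ D, d ≤ N) : ∀ x ∈ S, x ≤ M + N := by
  obtain ⟨T, rfl, hTC, hTD, hcov⟩ := h
  have bound {A : Multiset ℕ} {K : ℕ} (hA : ∀ a ∈ A, a ≤ K) (f : ℕ × ℕ × ℕ → ℕ)
      (hf : (T.map f).filter (· ≠ 0) ≤ A) (y) (hy : y ∈ T) : f y ≤ K := by
    by_cases h0 : f y = 0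
    · omega
    · exact hA _ <| Multiset.mem_of_le hf <|
        Multiset.mem_filter.mpr ⟨Multiset.mem_map_of_mem f hy, h0⟩
  simp only [Multiset.mem_map, forall_exists_index, and_imp]
  rintro _ y hy rfl
  have := hcov y hy
  have := bound hC _ hTC y hy
  have := bound hD _ hTD y hy
  omega

end DoubleCovers

theorem doubleOPT_le {S : Multiset ℕ} {β m : ℕ} (hβ : β ≤ m)
    (h : DoubleCovers (Finset.Icc 1 m).val (Finset.Icc 1 (m - β)).val S) :
    doubleOPT S β ≤ m :=
  Nat.sInf_le ⟨hβ, h⟩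

theorem doubleOPT_spec (S : Multiset ℕ) (β : ℕ) :
    β ≤ doubleOPT S β ∧
      DoubleCovers (Finset.Icc 1 (doubleOPT S β)).val
        (Finset.Icc 1 (doubleOPT S β - β)).val S := by
  suffices h : {m | β ≤ m ∧
      DoubleCovers (Finset.Icc 1 m).val (Finset.Icc 1 (m - β)).val S}.Nonempty from
    Nat.sInf_mem h
  set k := S.sum
  set n := S.card
  refine ⟨β + k + n, by omega, ?_⟩
  have hcov : DoubleCovers (Finset.Ioc k (k + n)).val (Finset.Ioc k (k + n)).val S :=
    .of_forall_le_add (by simp [n]) (by simp [n]) fun x hx c hc d hd => by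
      have := Multiset.le_sum_of_mem hx
      simp only [Finset.mem_val, Finset.mem_Ioc] at hc hd
      omega
  refine hcov.mono (Finset.val_le_iff.mpr fun x hx => ?_)
    (Finset.val_le_iff.mpr fun x hx => ?_) <;>
  · simp only [Finset.mem_Ioc, Finset.mem_Icc] at hx ⊢
    omega

theorem Nat.Icc_one_add_val (m k : ℕ) :
    (Finset.Icc 1 (m + k)).val = (Finset.Ioc m (m + k)).val + (Finset.Icc 1 m).val := by
  rw [← Finset.disjUnion_val _ _ (Finset.disjoint_left.mpr fun x hx hx' => by
    simp only [Finset.mem_Ioc, Finset.mem_Icc] at hx hx'; omega)]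
  congr 1
  ext x
  simp only [Finset.mem_Icc, Finset.disjUnion_eq_union, Finset.mem_union, Finset.mem_Ioc]
  omega

def roundBlocks (b : ℕ) (l : List ℕ) : List ℕ :=
  (List.range l.length).map fun i => l.getD (i / b * b) 0

theorem roundedSet_eq_roundBlocks (p : ℕ) (S : Multiset ℕ) :
    roundedSet p S = ↑(roundBlocks ((S.card + p - 1) / p) (S.sort (· ≥ ·))) :=
  rfl

section roundBlocks

variable {b : ℕ} {l : List ℕ}

@[simp]
theorem length_roundBlocks : (roundBlocks b l).length = l.length := by
  simp [roundBlocks]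

theorem getElem_roundBlocks {i : ℕ} (hi : i < (roundBlocks b l).length) :
    (roundBlocks b l)[i] = l[i / b * b]'(by
      simp only [length_roundBlocks] at hi
      exact (Nat.div_mul_le_self i b).trans_lt hi) := by
  simp only [roundBlocks, List.getElem_map, List.getElem_range]
  exact List.getD_eq_getElem ..

theorem mem_of_mem_roundBlocks {x : ℕ} (hx : x ∈ roundBlocks b l) : x ∈ l := by
  obtain ⟨i, hi, rfl⟩ := List.getElem_of_mem hx
  rw [getElem_roundBlocks]
  exact List.getElem_mem _

theorem forall₂_drop_roundBlocks_take (hl : l.Pairwise (· ≥ ·)) (hb : 0 < b) :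
    List.Forall₂ (· ≤ ·) ((roundBlocks b l).drop b) (l.take (l.length - b)) := by
  refine List.forall₂_iff_get.mpr ⟨by simp, fun j hj hj' => ?_⟩
  simp only [List.get_eq_getElem, List.getElem_drop, List.getElem_take, getElem_roundBlocks]
  have hj : j < (b + j) / b * b := by
    have := Nat.lt_div_mul_add (a := j) hb
    rw [Nat.add_comm b j, Nat.add_div_right j hb, Nat.succ_mul]
    exact this
  exact List.pairwise_iff_getElem.mp hl _ _ _ _ hj

end roundBlocks

theorem doubleOPT_roundedSet_le_general (S : Multiset ℕ)
    (β p : ℕ) (hp : 0 < p) :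
    doubleOPT (roundedSet p S) β ≤ doubleOPT S β + (S.card + p - 1) / p := by
  obtain rfl | hS := eq_or_ne S 0
  · simp [roundedSet]
  set b := (S.card + p - 1) / p
  set l := S.sort (· ≥ ·)
  obtain ⟨hβ, hcov⟩ := doubleOPT_spec S β
  set m := doubleOPT S β
  have hb : 0 < b := Nat.div_pos (by have := Multiset.card_pos.mpr hS; omega) hp
  have hS_le : ∀ x ∈ S, x ≤ m + (m - β) := hcov.le_add_of_mem (by simp) (by simp)
  have hfirst : DoubleCovers (Finset.Ioc m (m + b)).val (Finset.Ioc (m - β) (m - β + b)).val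
      ↑((roundBlocks b l).take b) :=
    .of_forall_le_add (by simp) (by simp) fun x hx c hc d hd => by
      have := hS_le x (by simpa [l] using mem_of_mem_roundBlocks (List.mem_of_mem_take hx))
      simp only [Finset.mem_val, Finset.mem_Ioc] at hc hd
      omega
  have hprefix : (↑(l.take (l.length - b)) : Multiset ℕ) ≤ S :=
    (Multiset.coe_le.mpr (List.take_sublist _ l).subperm).trans_eq (S.sort_eq _)
  have hrest : DoubleCovers (Finset.Icc 1 m).val (Finset.Icc 1 (m - β)).val
      ↑((roundBlocks b l).drop b) :=
    (hcov.of_le hprefix).of_rel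
      (Multiset.rel_coe_of_forall₂ (forall₂_drop_roundBlocks_take (S.pairwise_sort _) hb))
  refine doubleOPT_le (by omega) ?_
  rw [roundedSet_eq_roundBlocks, ← List.take_append_drop b (roundBlocks b l), ← Multiset.coe_add,
    Nat.sub_add_comm hβ, Nat.Icc_one_add_val, Nat.Icc_one_add_val]
  exact hfirst.add hrest

/-- `OPT(R_p(S), β) ≤ OPT(S, β) + ⌈n/p⌉` for the Double Prefix
Covering optimum, where `n = |S|`. -/
theorem doubleOPT_roundedSet_le (S : Multiset ℕ) (hS : ∀ x ∈ S, 0 < x)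
    (β p : ℕ) (hp : 0 < p) :
    doubleOPT (roundedSet p S) β ≤ doubleOPT S β + (S.card + p - 1) / p :=
  doubleOPT_roundedSet_le_general S β p hp
end

section
/- Let S be a multiset of positive integers, let β ≥ 0 be an integer, and let m and p be positive integers with m ≥ β. If the pair of rounded multisets (R_p([m]), R_p([m−β])) double-covers S, then the pair ([m'], [m'−β]) double-covers S, where m' = m + ⌈m/p⌉. -/
/-!
Listed in decreasing order, the `i`-th element of `R_p([n])` is `n - ⌊i/bₙ⌋ bₙ < n + bₙ - i`,
where `bₙ = ⌈n/p⌉`. Matching it with the `i`-th largest element `k - i` of `[k]` therefore raises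
every element as soon as `n + bₙ ≤ k`, and raising the parts used by a double cover keeps it a
double cover. Apply this to both sides, with `k = m + ⌈m/p⌉` and `k = m + ⌈m/p⌉ - β`; the second
choice works because `⌈(m - β)/p⌉ ≤ ⌈m/p⌉`.
-/

def Dominated {α : Type*} [LE α] (C C' : Multiset α) : Prop :=
  ∃ C'' ≤ C', Multiset.Rel (· ≤ ·) C C''

theorem Dominated.of_le_left {α : Type*} [LE α] {B C C' : Multiset α} (h : Dominated C C')
    (hB : B ≤ C) : Dominated B C' := by
  obtain ⟨D, hD, hrel⟩ := h
  obtain ⟨E, rfl⟩ := Multiset.le_iff_exists_add.mp hB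
  obtain ⟨D₁, D₂, hrel₁, -, rfl⟩ := Multiset.rel_add_left.mp hrel
  exact ⟨D₁, (Multiset.le_add_right _ _).trans hD, hrel₁⟩

theorem DoubleCovers.symm {C D S : Multiset ℕ} (h : DoubleCovers C D S) : DoubleCovers D C S := by
  obtain ⟨T, hS, hC, hD, hT⟩ := h
  refine ⟨T.map fun x => (x.1, x.2.2, x.2.1), ?_, ?_, ?_, ?_⟩
  · simpa [Multiset.map_map] using hS
  · simpa [Multiset.map_map] using hD
  · simpa [Multiset.map_map] using hC
  · intro x hx
    obtain ⟨y, hy, rfl⟩ := Multiset.mem_map.mp hx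
    exact (hT y hy).trans_eq (add_comm _ _)

theorem exists_raise_left_parts (T : Multiset (ℕ × ℕ × ℕ)) {Y : Multiset ℕ}
    (hY : Multiset.Rel (· ≤ ·) ((T.map fun x => x.2.1).filter (· ≠ 0)) Y) :
    ∃ T' : Multiset (ℕ × ℕ × ℕ),
      Multiset.Rel (fun x y => x.1 = y.1 ∧ x.2.1 ≤ y.2.1 ∧ x.2.2 = y.2.2) T T' ∧
      (T'.map fun x => x.2.1).filter (· ≠ 0) ≤ Y := by
  induction T using Multiset.induction generalizing Y with
  | empty => exact ⟨0, .zero, Multiset.zero_le _⟩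
  | cons a T ih =>
    by_cases ha : a.2.1 = 0
    · rw [Multiset.map_cons, Multiset.filter_cons_of_neg (p := (· ≠ 0)) _ (not_not.mpr ha)] at hY
      obtain ⟨T', hrel, hle⟩ := ih hY
      refine ⟨a ::ₘ T', hrel.cons ⟨rfl, le_rfl, rfl⟩, ?_⟩
      rwa [Multiset.map_cons, Multiset.filter_cons_of_neg (p := (· ≠ 0)) _ (not_not.mpr ha)]
    · rw [Multiset.map_cons, Multiset.filter_cons_of_pos (p := (· ≠ 0)) _ ha] at hY
      obtain ⟨y, Y', hay, hY', rfl⟩ := Multiset.rel_cons_left.mp hY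
      obtain ⟨T', hrel, hle⟩ := ih hY'
      refine ⟨(a.1, y, a.2.2) ::ₘ T', hrel.cons ⟨rfl, hay, rfl⟩, ?_⟩
      rw [Multiset.map_cons, Multiset.filter_cons_of_pos (p := (· ≠ 0)) _ (by dsimp only; omega)]
      exact Multiset.cons_le_cons y hle

theorem DoubleCovers.of_dominated_left {C C' D S : Multiset ℕ} (h : DoubleCovers C D S)
    (hC : Dominated C C') : DoubleCovers C' D S := by
  obtain ⟨T, hS, hTC, hTD, hT⟩ := h
  obtain ⟨Y, hYC', hY⟩ := hC.of_le_left hTC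
  obtain ⟨T', hrel, hT'Y⟩ := exists_raise_left_parts T hY
  have map_eq {f : ℕ × ℕ × ℕ → ℕ}
      (hf : ∀ x y, x.1 = y.1 ∧ x.2.1 ≤ y.2.1 ∧ x.2.2 = y.2.2 → f x = f y) :
      T'.map f = T.map f :=
    (Multiset.rel_eq.mp (Multiset.rel_map.mpr (hrel.mono fun x _ y _ hxy => hf x y hxy))).symm
  refine ⟨T', ?_, hT'Y.trans hYC', ?_, fun y hy => ?_⟩
  · rw [map_eq fun _ _ h => h.1, hS]
  · rwa [map_eq fun _ _ h => h.2.2]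
  · obtain ⟨x, hx, h₁, h₂, h₃⟩ :=
      Multiset.exists_mem_of_rel_of_mem (Multiset.rel_flip.mpr hrel) hy
    have := hT x hx
    omega

theorem Finset.Icc_one_val_eq_map_range (n : ℕ) :
    (Finset.Icc 1 n).val = (Multiset.range n).map (n - ·) := by
  refine (Multiset.Nodup.ext (Finset.nodup _) ?_).mpr fun x => ?_
  · exact (Multiset.nodup_range n).map_on fun i hi j hj h => by
      simp only [Multiset.mem_range] at hi hj; omega
  · simp only [Finset.mem_val, Finset.mem_Icc, Multiset.mem_map, Multiset.mem_range]
    constructor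
    · rintro ⟨h1, h2⟩; exact ⟨n - x, by omega, by omega⟩
    · rintro ⟨i, hi, rfl⟩; omega

theorem sort_Icc_one_ge (n : ℕ) :
    (Finset.Icc 1 n).val.sort (· ≥ ·) = (List.range n).map (n - ·) := by
  rw [Finset.Icc_one_val_eq_map_range, ← Multiset.map_sort _ _ (· ≤ ·), Multiset.sort_range]
  intro a ha b hb
  simp only [Multiset.mem_range] at ha hb
  omega

theorem roundedSet_Icc_one (p n : ℕ) :
    roundedSet p (Finset.Icc 1 n).val =
      (Multiset.range n).map fun i => n - i / ((n + p - 1) / p) * ((n + p - 1) / p) := by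
  have hcard : (Finset.Icc 1 n).val.card = n := by simp
  simp only [roundedSet, hcard, sort_Icc_one_ge, List.length_map, List.length_range]
  rw [Multiset.range, Multiset.map_coe, Multiset.coe_eq_coe]
  refine .of_eq (List.map_congr_left fun i hi => ?_)
  have : i / ((n + p - 1) / p) * ((n + p - 1) / p) < n :=
    (Nat.div_mul_le_self _ _).trans_lt (List.mem_range.mp hi)
  simp [this]

theorem roundedSet_Icc_one_dominated {p n k : ℕ} (hp : 0 < p) (hk : n + (n + p - 1) / p ≤ k) :
    Dominated (roundedSet p (Finset.Icc 1 n).val) (Finset.Icc 1 k).val := by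
  rw [roundedSet_Icc_one, Finset.Icc_one_val_eq_map_range k]
  refine ⟨(Multiset.range n).map (k - ·),
    Multiset.map_le_map (Multiset.range_le.mpr (le_self_add.trans hk)), ?_⟩
  rw [Multiset.rel_map]
  refine Multiset.rel_refl_of_refl_on fun i hi => ?_
  have hin : i < n := Multiset.mem_range.mp hi
  have hb : 0 < (n + p - 1) / p := Nat.div_pos (by omega) hp
  have := Nat.lt_div_mul_add (a := i) hb
  omega

theorem doubleCovers_of_rounded_doubleCovers_general (S : Multiset ℕ)
    (β m p : ℕ) (hp : 0 < p) (hβm : β ≤ m)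
    (h : DoubleCovers (roundedSet p (Finset.Icc 1 m).val)
          (roundedSet p (Finset.Icc 1 (m - β)).val) S) :
    DoubleCovers (Finset.Icc 1 (m + (m + p - 1) / p)).val
      (Finset.Icc 1 (m + (m + p - 1) / p - β)).val S := by
  have hceil : (m - β + p - 1) / p ≤ (m + p - 1) / p := Nat.div_le_div_right (by omega)
  have hC := roundedSet_Icc_one_dominated (k := m + (m + p - 1) / p) hp le_rfl
  have hD := roundedSet_Icc_one_dominated (n := m - β) (k := m + (m + p - 1) / p - β) hp (by omega)
  exact ((h.of_dominated_left hC).symm.of_dominated_left hD).symm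

/-- If `(R_p([m]), R_p([m − β]))` double-covers `S` (with `m ≥ β`),
then `([m'], [m' − β])` double-covers `S`, where `m' = m + ⌈m/p⌉`. -/
theorem doubleCovers_of_rounded_doubleCovers (S : Multiset ℕ) (hS : ∀ x ∈ S, 0 < x)
    (β m p : ℕ) (hm : 0 < m) (hp : 0 < p) (hβm : β ≤ m)
    (h : DoubleCovers (roundedSet p (Finset.Icc 1 m).val)
          (roundedSet p (Finset.Icc 1 (m - β)).val) S) :
    DoubleCovers (Finset.Icc 1 (m + (m + p - 1) / p)).val
      (Finset.Icc 1 (m + (m + p - 1) / p - β)).val S :=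
  doubleCovers_of_rounded_doubleCovers_general S β m p hp hβm h
end
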